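/- arXiv:1111.3497 — 12 statements merged into one kernel-verified Lean document; each statement's English description precedes it below -/
import Mathlib

section
/- Let X and B be finite subsets of a group G, with X nonempty. Suppose that |X*B|/|X| ≤ |Z*B|/|Z| for every nonempty subset Z of X. Then for every finite subset C of G, |C*X*B| * |X| ≤ |C*X| * |X*B| (Petridis's lemma). -/
open Finset Pointwise

/-- Petridis's lemma. -/
theorem petridis_lemma {G : Type*} [Group G] [DecidableEq G]
    (X B : Finset G) (hX : X.Nonempty)
    (hmin : ∀ Z : Finset G, Z ⊆ X → Z.Nonempty →
      (X * B).card * Z.card ≤ (Z * B).card * X.card) :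
    ∀ C : Finset G, (C * X * B).card * X.card ≤ (C * X).card * (X * B).card := by
  intro C
  induction' C using Finset.induction_on with x C _ ih
  · simp
  set X' := X ∩ ({x⁻¹} * (C * X)) with hX'
  set C' := insert x C with hC'
  have h₀ : {x} * X' = ({x} * X) ∩ (C * X) := by
    rw [hX', singleton_mul_inter, ← mul_assoc, singleton_mul_singleton,
      mul_inv_cancel, singleton_one, one_mul]
  have hsub : {x} * X' * B ⊆ C * X * B := by
    apply mul_subset_mul_right
    rw [h₀]; exact inter_subset_right
  have hsub2 : {x} * X' * B ⊆ {x} * X * B :=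
    mul_subset_mul_right (mul_subset_mul_left inter_subset_left)
  have hCX : C' * X = C * X ∪ {x} * X := by
    rw [hC', insert_eq, union_mul, union_comm]
  have hCXB : C' * X * B ⊆ C * X * B ∪ ({x} * X * B) \ ({x} * X' * B) := by
    rw [hCX, union_mul]
    intro a ha
    rcases mem_union.1 ha with h | h
    · exact mem_union_left _ h
    · by_cases hx : a ∈ {x} * X' * B
      · exact mem_union_left _ (hsub hx)
      · exact mem_union_right _ (mem_sdiff.2 ⟨h, hx⟩)
  -- cardinalities of left translates
  have hcard1 : ({x} * X * B).card = (X * B).card := by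
    rw [mul_assoc, singleton_mul]; exact Finset.card_image_of_injective _ (mul_right_injective x)
  have hcard2 : ({x} * X' * B).card = (X' * B).card := by
    rw [mul_assoc, singleton_mul]; exact Finset.card_image_of_injective _ (mul_right_injective x)
  have hcard3 : ({x} * X).card = X.card := by
    rw [singleton_mul]; exact Finset.card_image_of_injective _ (mul_right_injective x)
  have hcard4 : ({x} * X').card = X'.card := by
    rw [singleton_mul]; exact Finset.card_image_of_injective _ (mul_right_injective x)
  -- key inequality 1
  have key1 : (C' * X * B).card + (X' * B).card ≤ (C * X * B).card + (X * B).card := by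
    have := Finset.card_le_card hCXB
    have hd : (({x} * X * B) \ ({x} * X' * B)).card = (X * B).card - (X' * B).card := by
      rw [Finset.card_sdiff_of_subset hsub2, hcard1, hcard2]
    have hle : (X' * B).card ≤ (X * B).card := by
      rw [← hcard1, ← hcard2]; exact Finset.card_le_card hsub2
    have h5 : (C' * X * B).card ≤ (C * X * B).card + ((X * B).card - (X' * B).card) := by
      calc (C' * X * B).card ≤ (C * X * B ∪ ({x} * X * B) \ ({x} * X' * B)).card :=
            Finset.card_le_card hCXB
        _ ≤ (C * X * B).card + (({x} * X * B) \ ({x} * X' * B)).card := Finset.card_union_le _ _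
        _ = (C * X * B).card + ((X * B).card - (X' * B).card) := by rw [hd]
    omega
  -- key equality 2
  have key2 : (C' * X).card + X'.card = (C * X).card + X.card := by
    have := Finset.card_union_add_card_inter (C * X) ({x} * X)
    rw [← hCX] at this
    have hint : C * X ∩ ({x} * X) = {x} * X' := by rw [h₀, inter_comm]
    rw [hint, hcard4, hcard3] at this
    omega
  -- hmin applied to X' (or trivial if X' empty)
  have key3 : (X * B).card * X'.card ≤ (X' * B).card * X.card := by
    rcases X'.eq_empty_or_nonempty with h | h
    · simp [h]
    · exact hmin X' inter_subset_left h
  have main : (C' * X * B).card * X.card + (X * B).card * X'.card ≤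
      (C' * X).card * (X * B).card + X'.card * (X * B).card := by
    calc (C' * X * B).card * X.card + (X * B).card * X'.card
        ≤ (C' * X * B).card * X.card + (X' * B).card * X.card := by
          exact Nat.add_le_add_left key3 _
      _ = ((C' * X * B).card + (X' * B).card) * X.card := by ring
      _ ≤ ((C * X * B).card + (X * B).card) * X.card := Nat.mul_le_mul_right _ key1
      _ = (C * X * B).card * X.card + (X * B).card * X.card := by ring
      _ ≤ (C * X).card * (X * B).card + (X * B).card * X.card := Nat.add_le_add_right ih _
      _ = ((C * X).card + X.card) * (X * B).card := by ring
      _ = ((C' * X).card + X'.card) * (X * B).card := by rw [key2]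
      _ = (C' * X).card * (X * B).card + X'.card * (X * B).card := by ring
  have : (X * B).card * X'.card = X'.card * (X * B).card := Nat.mul_comm _ _
  omega
end

section
/- Let A and B be finite subsets of a group G with B a normal subset (i.e., g⁻¹Bg = B for all g in G), A nonempty, and suppose |A*B| ≤ K|A| for some real K ≥ 0. Then there exists a nonempty subset X ⊆ A such that for every positive integer m, |X * B^m| ≤ K^m |X|, where B^m denotes the m-fold product set B*B*…*B. -/
open Finset Pointwise

/-- Plünnecke's theorem for normal subsets of nonabelian groups. -/
theorem pluennecke_normal {G : Type*} [Group G] [DecidableEq G]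
    (A B : Finset G) (hA : A.Nonempty)
    (hBnormal : ∀ g : G, B.image (fun b => g⁻¹ * b * g) = B)
    (K : ℝ) (hK : 0 ≤ K)
    (hAB : ((A * B).card : ℝ) ≤ K * A.card) :
    ∃ X : Finset G, X ⊆ A ∧ X.Nonempty ∧
      ∀ m : ℕ, 0 < m → ((X * B ^ m).card : ℝ) ≤ K ^ m * X.card := by
  classical
  -- B commutes with every finset
  have hcomm : ∀ S : Finset G, B * S = S * B := by
    intro S
    ext a
    simp only [Finset.mem_mul]
    constructor
    · rintro ⟨b, hb, s, hs, rfl⟩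
      refine ⟨s, hs, s⁻¹ * b * s, ?_, by group⟩
      rw [← hBnormal s]
      exact Finset.mem_image_of_mem _ hb
    · rintro ⟨s, hs, b, hb, rfl⟩
      refine ⟨s * b * s⁻¹, ?_, s, hs, by group⟩
      rw [← hBnormal s⁻¹]
      exact Finset.mem_image.2 ⟨b, hb, by group⟩
  have hcommpow : ∀ (k : ℕ) (S : Finset G), B ^ k * S = S * B ^ k := by
    intro k
    induction k with
    | zero => intro S; simp
    | succ n ih =>
      intro S
      rw [pow_succ, mul_assoc, hcomm S, ← mul_assoc, ih S, mul_assoc]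
  -- choose X minimizing |X*B|/|X|
  obtain ⟨X, hXmem, hXmin⟩ := Finset.exists_min_image
      (A.powerset.filter fun Y => Y.Nonempty)
      (fun Y => ((Y * B).card : ℝ) / Y.card)
      ⟨A, by simp [hA]⟩
  simp only [Finset.mem_filter, Finset.mem_powerset] at hXmem
  obtain ⟨hXA, hXne⟩ := hXmem
  have hXcard : (0 : ℝ) < X.card := by exact_mod_cast Finset.card_pos.2 hXne
  set r : ℝ := ((X * B).card : ℝ) / X.card with hr_def
  have hr0 : 0 ≤ r := div_nonneg (by positivity) hXcard.le
  have hrX : r * X.card = ((X * B).card : ℝ) := by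
    rw [hr_def, div_mul_cancel₀]; exact hXcard.ne'
  have hmin : ∀ Y : Finset G, Y ⊆ A → r * Y.card ≤ ((Y * B).card : ℝ) := by
    intro Y hYA
    rcases Y.eq_empty_or_nonempty with rfl | hYne
    · simp
    · have hYcard : (0 : ℝ) < Y.card := by exact_mod_cast Finset.card_pos.2 hYne
      have := hXmin Y (by simp [hYA, hYne])
      rw [div_le_div_iff₀ hXcard hYcard] at this
      rw [hr_def, div_mul_eq_mul_div, div_le_iff₀ hXcard]
      nlinarith [this]
  have hrK : r ≤ K := by
    have := hXmin A (by simp [hA])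
    have hAcard : (0 : ℝ) < A.card := by exact_mod_cast Finset.card_pos.2 hA
    calc r ≤ ((A * B).card : ℝ) / A.card := this
      _ ≤ K := by rw [div_le_iff₀ hAcard]; exact hAB
  -- Petridis lemma
  have petridis : ∀ C : Finset G, ((C * X * B).card : ℝ) ≤ r * ((C * X).card : ℝ) := by
    intro C
    induction C using Finset.induction_on with
    | empty => simp [Finset.empty_mul]
    | @insert c C hc ih =>
      set Y : Finset G := X.filter (fun x => c * x ∈ C * X) with hY_def
      have hYX : Y ⊆ X := Finset.filter_subset _ _
      have hinsert : insert c C * X = c • X ∪ C * X := by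
        rw [Finset.insert_eq, Finset.union_mul, Finset.singleton_mul]
      -- card of insert c C * X
      have hcard1 : ((insert c C * X).card : ℝ) = (C * X).card + X.card - Y.card := by
        have hsplit : insert c C * X = C * X ∪ c • (X \ Y) := by
          rw [hinsert]
          apply Finset.Subset.antisymm
          · intro a ha
            rcases Finset.mem_union.1 ha with h | h
            · obtain ⟨x, hx, rfl⟩ := Finset.mem_smul_finset.1 h
              by_cases hxY : c * x ∈ C * X
              · exact Finset.mem_union_left _ hxY
              · exact Finset.mem_union_right _ (Finset.mem_smul_finset.2
                  ⟨x, Finset.mem_sdiff.2 ⟨hx, fun hY => hxY ((Finset.mem_filter.1 hY).2)⟩, rfl⟩)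
            · exact Finset.mem_union_left _ h
          · apply Finset.union_subset
            · exact Finset.subset_union_right
            · refine Finset.Subset.trans ?_ Finset.subset_union_left
              exact Finset.smul_finset_subset_smul_finset (Finset.sdiff_subset)
        have hdisj : Disjoint (C * X) (c • (X \ Y)) := by
          rw [Finset.disjoint_right]
          intro a ha
          obtain ⟨x, hx, rfl⟩ := Finset.mem_smul_finset.1 ha
          obtain ⟨hx1, hx2⟩ := Finset.mem_sdiff.1 hx
          intro hmem
          exact hx2 (Finset.mem_filter.2 ⟨hx1, hmem⟩)
        rw [hsplit, Finset.card_union_of_disjoint hdisj, Finset.card_smul_finset,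
          Finset.card_sdiff_of_subset hYX]
        push_cast [Finset.card_le_card hYX]
        ring
      -- card of insert c C * X * B
      have hsub : insert c C * X * B ⊆ (C * X * B) ∪ c • ((X * B) \ (Y * B)) := by
        rw [hinsert, Finset.union_mul]
        apply Finset.union_subset
        · intro a ha
          rw [← Finset.singleton_mul, mul_assoc, Finset.singleton_mul] at ha
          obtain ⟨w, hw, rfl⟩ := Finset.mem_smul_finset.1 ha
          by_cases hwY : w ∈ Y * B
          · obtain ⟨y, hy, b, hb, rfl⟩ := Finset.mem_mul.1 hwY
            apply Finset.mem_union_left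
            have hcy' : c * y ∈ C * X := (Finset.mem_filter.1 (hy : y ∈ Y)).2
            refine Finset.mem_mul.2 ⟨c * y, hcy', b, hb, by simp [smul_eq_mul, mul_assoc]⟩
          · exact Finset.mem_union_right _
              (Finset.mem_smul_finset.2 ⟨w, Finset.mem_sdiff.2 ⟨hw, hwY⟩, rfl⟩)
        · exact Finset.subset_union_left
      have hYB : Y * B ⊆ X * B := Finset.mul_subset_mul_right hYX
      have hcard2 : ((insert c C * X * B).card : ℝ) ≤
          (C * X * B).card + ((X * B).card - (Y * B).card) := by
        calc ((insert c C * X * B).card : ℝ)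
            ≤ (((C * X * B) ∪ c • ((X * B) \ (Y * B))).card : ℝ) := by
              exact_mod_cast Finset.card_le_card hsub
          _ ≤ (C * X * B).card + (c • ((X * B) \ (Y * B))).card := by
              exact_mod_cast Finset.card_union_le _ _
          _ = (C * X * B).card + ((X * B).card - (Y * B).card) := by
              rw [Finset.card_smul_finset, Finset.card_sdiff_of_subset hYB]
              push_cast [Finset.card_le_card hYB]
              ring
      have hYA : Y ⊆ A := hYX.trans hXA
      have hminY := hmin Y hYA
      calc ((insert c C * X * B).card : ℝ)
          ≤ (C * X * B).card + ((X * B).card - (Y * B).card) := hcard2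
        _ ≤ r * (C * X).card + (r * X.card - r * Y.card) := by
            linarith [ih, hminY, hrX]
        _ = r * ((C * X).card + X.card - Y.card) := by ring
        _ = r * ((insert c C * X).card : ℝ) := by rw [hcard1]
  -- main induction
  have key : ∀ m : ℕ, ((X * B ^ (m + 1)).card : ℝ) ≤ r ^ (m + 1) * X.card := by
    intro m
    induction m with
    | zero => simp only [zero_add, pow_one]; linarith [hrX]
    | succ n ih =>
      have h1 : X * B ^ (n + 1 + 1) = X * B ^ (n + 1) * B := by
        rw [pow_succ, mul_assoc]
      have h2 := petridis (B ^ (n + 1))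
      rw [hcommpow] at h2
      calc ((X * B ^ (n + 1 + 1)).card : ℝ) = ((X * B ^ (n + 1) * B).card : ℝ) := by rw [h1]
        _ ≤ r * ((X * B ^ (n + 1)).card : ℝ) := h2
        _ ≤ r * (r ^ (n + 1) * X.card) := mul_le_mul_of_nonneg_left ih hr0
        _ = r ^ (n + 1 + 1) * X.card := by ring
  refine ⟨X, hXA, hXne, fun m hm => ?_⟩
  obtain ⟨n, rfl⟩ : ∃ n, m = n + 1 := ⟨m - 1, by omega⟩
  calc ((X * B ^ (n + 1)).card : ℝ) ≤ r ^ (n + 1) * X.card := key n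
    _ ≤ K ^ (n + 1) * X.card := by
        apply mul_le_mul_of_nonneg_right (pow_le_pow_left₀ hr0 hrK (n + 1)) hXcard.le
end

section
/- Let B be a finite nonempty normal subset of a group G (invariant under conjugation) and K ≥ 0 a real with |B*B| ≤ K|B|. Then |B^m| ≤ K^m |B| for every positive integer m, where B^m denotes the m-fold product set. -/
open Finset Pointwise

private theorem petridis_key {G : Type*} [Group G] [DecidableEq G]
    {B : Finset G} (hBc : ∀ C : Finset G, B * C = C * B)
    {A : Finset G} (C : Finset G)
    (hA : ∀ A' ⊆ A, (A * B).card * A'.card ≤ (A' * B).card * A.card) :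
    (A * B * C).card * A.card ≤ (A * B).card * (A * C).card := by
  induction' C using Finset.induction_on with x C _ ih
  · simp
  set A' := A ∩ (A * C / {x}) with hA'
  set C' := insert x C with hC'
  have h₀ : A' * {x} = A * {x} ∩ (A * C) := by
    rw [hA', inter_mul_singleton, (isUnit_singleton x).div_mul_cancel]
  have h₁ : A * B * C' = A * B * C ∪ (A * B * {x}) \ (A' * B * {x}) := by
    rw [hC', insert_eq, union_comm, mul_union]
    refine (sup_sdiff_eq_sup ?_).symm
    have e1 : A' * B * {x} = A' * {x} * B := by
      rw [mul_assoc, mul_assoc, hBc {x}]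
    have e2 : A * B * C = A * C * B := by
      rw [mul_assoc, mul_assoc, hBc C]
    rw [e1, e2, h₀]
    exact mul_subset_mul_right inter_subset_right
  have h₂ : A' * B * {x} ⊆ A * B * {x} :=
    mul_subset_mul_right (mul_subset_mul_right inter_subset_left)
  have h₃ : (A * B * C').card ≤ (A * B * C).card + (A * B).card - (A' * B).card := by
    rw [h₁]
    refine (card_union_le _ _).trans_eq ?_
    rw [card_sdiff_of_subset h₂, ← add_tsub_assoc_of_le (card_le_card h₂), card_mul_singleton,
      card_mul_singleton]
  refine (mul_le_mul_left h₃ _).trans ?_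
  rw [tsub_mul, add_mul]
  refine (tsub_le_tsub (add_le_add_left ih _) <| hA _ inter_subset_left).trans_eq ?_
  rw [← mul_add, ← mul_tsub, ← hA', hC', insert_eq, mul_union, ← card_mul_singleton A x, ←
    card_mul_singleton A' x, add_comm (A * C).card, h₀,
    eq_tsub_of_add_eq (card_union_add_card_inter _ _)]

/-- Doubling lemma for normal subsets of nonabelian groups. -/
theorem normal_doubling {G : Type*} [Group G] [DecidableEq G]
    (B : Finset G) (hB : B.Nonempty)
    (hBnormal : ∀ g : G, B.image (fun b => g⁻¹ * b * g) = B)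
    (K : ℝ) (hK : 0 ≤ K)
    (hBB : ((B * B).card : ℝ) ≤ K * B.card) :
    ∀ m : ℕ, 0 < m → ((B ^ m).card : ℝ) ≤ K ^ m * B.card := by
  classical
  -- B commutes with every singleton, hence with every finset
  have hsing : ∀ x : G, B * {x} = {x} * B := by
    intro x
    have h1 : ∀ b ∈ B, x⁻¹ * b * x ∈ B := fun b hb => by
      rw [← hBnormal x]; exact Finset.mem_image_of_mem _ hb
    have h2 : ∀ b ∈ B, x * b * x⁻¹ ∈ B := fun b hb => by
      rw [← hBnormal x⁻¹]
      simpa using Finset.mem_image_of_mem (fun b => (x⁻¹)⁻¹ * b * x⁻¹) hb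
    ext y
    constructor
    · intro hy
      rw [Finset.mem_mul] at hy
      obtain ⟨b, hb, c, hc, hbc⟩ := hy
      rw [Finset.mem_singleton] at hc
      rw [Finset.mem_mul]
      refine ⟨x, Finset.mem_singleton_self x, x⁻¹ * b * x, h1 b hb, ?_⟩
      rw [← hbc, hc]; group
    · intro hy
      rw [Finset.mem_mul] at hy
      obtain ⟨c, hc, b, hb, hbc⟩ := hy
      rw [Finset.mem_singleton] at hc
      rw [Finset.mem_mul]
      refine ⟨x * b * x⁻¹, h2 b hb, x, Finset.mem_singleton_self x, ?_⟩
      rw [← hbc, hc]; group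
  have hBc : ∀ C : Finset G, B * C = C * B := by
    intro C
    induction C using Finset.induction_on with
    | empty => simp
    | @insert x C _ ih =>
      rw [insert_eq, mul_union, union_mul, ih, hsing]
  -- pick a minimizing subset U of B
  obtain ⟨U, hU, hUmin⟩ := Finset.exists_min_image (B.powerset.erase ∅)
    (fun Y ↦ ((Y * B).card : ℝ) / Y.card) ⟨B, mem_erase_of_ne_of_mem hB.ne_empty (mem_powerset_self _)⟩
  rw [mem_erase, mem_powerset, ← nonempty_iff_ne_empty] at hU
  obtain ⟨hUne, hUB⟩ := hU
  have hUpos : (0 : ℝ) < U.card := by exact_mod_cast hUne.card_pos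
  have hBpos : (0 : ℝ) < B.card := by exact_mod_cast hB.card_pos
  set r : ℝ := ((U * B).card : ℝ) / U.card with hr
  have hrK : r ≤ K := by
    have h1 := hUmin B (mem_erase_of_ne_of_mem hB.ne_empty (mem_powerset_self _))
    calc r ≤ ((B * B).card : ℝ) / B.card := h1
      _ ≤ K := by rw [div_le_iff₀ hBpos]; exact hBB
  have hr0 : 0 ≤ r := by positivity
  -- minimality hypothesis in the Petridis form
  have hA : ∀ A' ⊆ U, (U * B).card * A'.card ≤ (A' * B).card * U.card := by
    intro A' hA'
    rcases A'.eq_empty_or_nonempty with rfl | hA'ne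
    · simp
    have hApos : (0 : ℝ) < A'.card := by exact_mod_cast hA'ne.card_pos
    have := hUmin A' (mem_erase_of_ne_of_mem hA'ne.ne_empty
      (mem_powerset.2 (hA'.trans hUB)))
    rw [div_le_div_iff₀ hUpos hApos] at this
    exact_mod_cast this
  -- key growth estimate
  have key : ∀ m : ℕ, ((U * B ^ m).card : ℝ) ≤ r ^ m * U.card := by
    intro m
    induction m with
    | zero => simp
    | succ m ih =>
      have e : U * B ^ (m + 1) = U * B * B ^ m := by
        rw [pow_succ, ← hBc (B ^ m), ← mul_assoc]
      have h := petridis_key hBc (A := U) (B ^ m) hA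
      have h' : ((U * B ^ (m+1)).card : ℝ) * U.card ≤ (U * B).card * (U * B ^ m).card := by
        rw [e]; exact_mod_cast h
      have hrU : ((U * B).card : ℝ) = r * U.card := by
        rw [hr, div_mul_cancel₀]; exact hUpos.ne'
      calc ((U * B ^ (m+1)).card : ℝ) = ((U * B ^ (m+1)).card : ℝ) * U.card / U.card := by
            rw [mul_div_cancel_right₀]; exact hUpos.ne'
        _ ≤ (U * B).card * (U * B ^ m).card / U.card := by
            exact div_le_div_of_nonneg_right h' hUpos.le
        _ = r * (U * B ^ m).card := by rw [hrU, mul_right_comm, mul_div_cancel_right₀ _ hUpos.ne']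
        _ ≤ r * (r ^ m * U.card) := by
            exact mul_le_mul_of_nonneg_left ih hr0
        _ = r ^ (m + 1) * U.card := by ring
  intro m hm
  have h1 : ((B ^ m).card : ℝ) ≤ ((U * B ^ m).card : ℝ) := by
    exact_mod_cast Finset.card_le_card_mul_left hUne
  have h2 : (U.card : ℝ) ≤ B.card := by exact_mod_cast Finset.card_le_card hUB
  calc ((B ^ m).card : ℝ) ≤ r ^ m * U.card := h1.trans (key m)
    _ ≤ K ^ m * B.card := by
        apply mul_le_mul (pow_le_pow_left₀ hr0 hrK m) h2 (by positivity) (by positivity)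
end

section
/- Let A and B be finite subsets of a group G with B normal in G and A nonempty, and suppose |A*B| ≤ K|A| for some real K ≥ 0. Then for all positive integers m and n, |B^m * (B⁻¹)^n| ≤ K^(m+n) |A| (Plünnecke–Ruzsa estimate for normal sets). -/
open Finset Pointwise Nat

namespace PRNormal
variable {G : Type*} [Group G] [DecidableEq G]

/-- A finset that commutes with every singleton commutes with every finset. -/
lemma comm_of_normal {B : Finset G}
    (hB : ∀ g : G, B.image (fun b => g⁻¹ * b * g) = B) (Y : Finset G) :
    B * Y = Y * B := by
  ext x
  simp only [Finset.mem_mul]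
  constructor
  · rintro ⟨b, hb, y, hy, rfl⟩
    refine ⟨y, hy, y⁻¹ * b * y, ?_, by group⟩
    rw [← hB y]; exact Finset.mem_image_of_mem _ hb
  · rintro ⟨y, hy, b, hb, rfl⟩
    refine ⟨y * b * y⁻¹, ?_, y, hy, by group⟩
    have := hB y⁻¹
    rw [← this]
    simpa using Finset.mem_image_of_mem (fun b => y * b * y⁻¹) hb

lemma pow_comm_of_normal {B : Finset G}
    (hB : ∀ g : G, B.image (fun b => g⁻¹ * b * g) = B) (m : ℕ) (Y : Finset G) :
    B ^ m * Y = Y * B ^ m := by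
  induction m with
  | zero => simp
  | succ n ih => rw [pow_succ, mul_assoc, comm_of_normal hB Y, ← mul_assoc, ih, mul_assoc]

lemma petridis {A B : Finset G}
    (hB : ∀ g : G, B.image (fun b => g⁻¹ * b * g) = B)
    (hA : ∀ A' ⊆ A, #(A * B) * #A' ≤ #(A' * B) * #A) (C : Finset G) :
    #(A * B * C) * #A ≤ #(A * B) * #(A * C) := by
  induction' C using Finset.induction_on with x C _ ih
  · simp
  set A' := A ∩ (A * C / {x}) with hA'
  set C' := insert x C with hC'
  have h₀ : A' * {x} = A * {x} ∩ (A * C) := by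
    rw [hA', inter_mul_singleton, (isUnit_singleton x).div_mul_cancel]
  have hcomm : ∀ X : Finset G, X * B * ({x} : Finset G) = X * {x} * B := fun X => by
    rw [mul_assoc, comm_of_normal hB, mul_assoc]
  have h₁ : A * B * C' = A * B * C ∪ (A * B * {x}) \ (A' * B * {x}) := by
    rw [hC', insert_eq, union_comm, mul_union]
    refine (sup_sdiff_eq_sup ?_).symm
    have hABC : A * B * C = A * C * B := by
      rw [mul_assoc, comm_of_normal hB, mul_assoc]
    rw [hcomm, hABC, h₀]
    exact mul_subset_mul_right inter_subset_right
  have h₂ : A' * B * {x} ⊆ A * B * {x} :=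
    mul_subset_mul_right (mul_subset_mul_right inter_subset_left)
  have h₃ : #(A * B * C') ≤ #(A * B * C) + #(A * B) - #(A' * B) := by
    rw [h₁]
    refine (card_union_le _ _).trans_eq ?_
    rw [card_sdiff_of_subset h₂, ← add_tsub_assoc_of_le (card_le_card h₂), card_mul_singleton,
      card_mul_singleton]
  refine (mul_le_mul_left h₃ _).trans ?_
  rw [tsub_mul, add_mul]
  refine (tsub_le_tsub (add_le_add_left ih _) <| hA _ inter_subset_left).trans_eq ?_
  rw [← mul_add, ← mul_tsub, ← hA', hC', insert_eq, mul_union, ← card_mul_singleton A x, ←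
    card_mul_singleton A' x, add_comm #_, h₀,
    eq_tsub_of_add_eq (card_union_add_card_inter _ _)]

private theorem mul_aux {A B C : Finset G} (hA : A.Nonempty) (hAB : A ⊆ B)
    (h : ∀ A' ∈ B.powerset.erase ∅, (#(A * C) : ℚ≥0) / #A ≤ #(A' * C) / #A') :
    ∀ A' ⊆ A, #(A * C) * #A' ≤ #(A' * C) * #A := by
  rintro A' hAA'
  obtain rfl | hA' := A'.eq_empty_or_nonempty
  · simp
  have hA₀ : (0 : ℚ≥0) < #A := Nat.cast_pos.2 hA.card_pos
  have hA₀' : (0 : ℚ≥0) < #A' := Nat.cast_pos.2 hA'.card_pos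
  exact mod_cast
    (div_le_div_iff₀ hA₀ hA₀').1
      (h _ <| mem_erase_of_ne_of_mem hA'.ne_empty <| mem_powerset.2 <| hAA'.trans hAB)

private lemma card_mul_pow_le {A B : Finset G}
    (hB : ∀ g : G, B.image (fun b => g⁻¹ * b * g) = B)
    (hAB : ∀ A' ⊆ A, #(A * B) * #A' ≤ #(A' * B) * #A) (n : ℕ) :
    #(A * B ^ n) ≤ (#(A * B) / #A : ℚ≥0) ^ n * #A := by
  obtain rfl | hA := A.eq_empty_or_nonempty
  · simp
  induction' n with n ih
  · simp
  refine le_of_mul_le_mul_right ?_ (by positivity : (0 : ℚ≥0) < #A)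
  calc
    ((#(A * B ^ (n + 1))) * #A : ℚ≥0)
      = #(A * B * B ^ n) * #A := by rw [_root_.pow_succ', ← mul_assoc]
    _ ≤ #(A * B) * #(A * B ^ n) := mod_cast petridis hB hAB _
    _ ≤ #(A * B) * ((#(A * B) / #A) ^ n * #A) := by gcongr
    _ = (#(A * B) / #A) ^ (n + 1) * #A * #A := by field_simp; rw [pow_succ, mul_left_comm, mul_div_assoc', mul_div_cancel_left₀ _ (by positivity : (#A : ℚ≥0) ≠ 0), mul_comm]

theorem pr_key {A : Finset G} (hA : A.Nonempty) {B : Finset G}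
    (hB : ∀ g : G, B.image (fun b => g⁻¹ * b * g) = B) (m n : ℕ) :
    #(B ^ m / B ^ n) ≤ (#(A * B) / #A : ℚ≥0) ^ (m + n) * #A := by
  have hA' : A ∈ A.powerset.erase ∅ := mem_erase_of_ne_of_mem hA.ne_empty (mem_powerset_self _)
  obtain ⟨C, hC, hCmin⟩ :=
    exists_min_image (A.powerset.erase ∅) (fun C ↦ #(C * B) / #C : _ → ℚ≥0) ⟨A, hA'⟩
  rw [mem_erase, mem_powerset, ← nonempty_iff_ne_empty] at hC
  obtain ⟨hC, hCA⟩ := hC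
  refine le_of_mul_le_mul_right ?_ (by positivity : (0 : ℚ≥0) < #C)
  calc
    (#(B ^ m / B ^ n) * #C : ℚ≥0)
      ≤ #(B ^ m * C) * #(B ^ n * C) := mod_cast ruzsa_triangle_inequality_div_mul_mul ..
    _ = #(C * B ^ m) * #(C * B ^ n) := by
        rw [pow_comm_of_normal hB, pow_comm_of_normal hB]
    _ ≤ ((#(C * B) / #C) ^ m * #C) * ((#(C * B) / #C : ℚ≥0) ^ n * #C) := by
      gcongr <;> exact card_mul_pow_le hB (mul_aux hC hCA hCmin) _
    _ = (#(C * B) / #C) ^ (m + n) * #C * #C := by ring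
    _ ≤ (#(A * B) / #A) ^ (m + n) * #A * #C := by gcongr (?_ ^ _) * #?_ * _; exact hCmin _ hA'

end PRNormal

/-- Plünnecke–Ruzsa estimates for normal subsets of nonabelian groups. -/
theorem pluennecke_ruzsa_normal {G : Type*} [Group G] [DecidableEq G]
    (A B : Finset G) (hA : A.Nonempty)
    (hBnormal : ∀ g : G, B.image (fun b => g⁻¹ * b * g) = B)
    (K : ℝ) (hK : 0 ≤ K)
    (hAB : ((A * B).card : ℝ) ≤ K * A.card) :
    ∀ m n : ℕ, 0 < m → 0 < n →
      ((B ^ m * B⁻¹ ^ n).card : ℝ) ≤ K ^ (m + n) * A.card := by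
  intro m n _ _
  have hkey := PRNormal.pr_key hA hBnormal m n
  have hrw : B ^ m * B⁻¹ ^ n = B ^ m / B ^ n := by
    rw [div_eq_mul_inv, inv_pow]
  have hA0 : (0 : ℝ) < A.card := by exact_mod_cast hA.card_pos
  have hq : ((#(A * B) : ℝ) / #A) ≤ K := by
    rw [div_le_iff₀ hA0]; exact hAB
  have hkeyR : ((B ^ m / B ^ n).card : ℝ) ≤ ((#(A * B) : ℝ) / #A) ^ (m + n) * #A := by
    have := hkey
    have h2 : ((#(B ^ m / B ^ n) : ℚ≥0) : ℝ) ≤ (((#(A * B) / #A : ℚ≥0) ^ (m + n) * #A : ℚ≥0) : ℝ) :=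
      by exact_mod_cast this
    push_cast at h2
    exact_mod_cast h2
  rw [hrw]
  calc ((B ^ m / B ^ n).card : ℝ) ≤ ((#(A * B) : ℝ) / #A) ^ (m + n) * #A := hkeyR
    _ ≤ K ^ (m + n) * #A :=
      mul_le_mul_of_nonneg_right (pow_le_pow_left₀ (by positivity) hq _) hA0.le
end

section
/- Let S be a finite nonempty subset of a group G and K ≥ 1 a real such that |S * g⁻¹Sg| ≤ K|S| for all g ∈ G. Then for any a, b ∈ G, |S*aS*bS| ≤ K¹²|S|. -/
open Finset Pointwise

private lemma petridis_ind {G : Type*} [Group G] [DecidableEq G] (X B : Finset G)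
    (hmin : ∀ Z ⊆ X, (X * B).card * Z.card ≤ (Z * B).card * X.card) :
    ∀ C : Finset G, (C * X * B).card * X.card ≤ (X * B).card * (C * X).card := by
  classical
  intro C
  induction C using Finset.induction_on with
  | empty => simp
  | insert x C hxC ih =>
    set X' := X.filter (fun z => ∀ b ∈ B, x * z * b ∈ C * X * B) with hX'def
    set Z₀ := X.filter (fun z => x * z ∈ C * X) with hZ₀def
    have hX'X : X' ⊆ X := filter_subset _ _
    have hZ₀X' : Z₀ ⊆ X' := by
      intro z hz
      simp only [hZ₀def, mem_filter] at hz
      simp only [hX'def, mem_filter]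
      exact ⟨hz.1, fun b hb => mul_mem_mul hz.2 hb⟩
    have hCX : insert x C * X = x • X ∪ C * X := by
      rw [insert_eq, union_mul, singleton_mul]
    have hCXB : insert x C * X * B = x • (X * B) ∪ C * X * B := by
      rw [hCX, union_mul, smul_mul_assoc]
    have hsub1 : x • (X * B) \ (C * X * B) ⊆ x • ((X * B) \ (X' * B)) := by
      intro w hw
      rcases mem_sdiff.mp hw with ⟨hw1, hw2⟩
      rcases mem_smul_finset.mp hw1 with ⟨m, hm, rfl⟩
      refine mem_smul_finset.mpr ⟨m, mem_sdiff.mpr ⟨hm, ?_⟩, rfl⟩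
      intro hmX'
      rcases mem_mul.mp hmX' with ⟨z, hz, bb, hbb, rfl⟩
      have hzX' : ∀ b ∈ B, x * z * b ∈ C * X * B :=
        (by simpa [hX'def, mem_filter] using hz :
          z ∈ X ∧ ∀ b ∈ B, x * z * b ∈ C * X * B).2
      exact hw2 (by simpa [mul_assoc, smul_eq_mul] using hzX' bb hbb)
    have hX'BXB : X' * B ⊆ X * B := mul_subset_mul_right hX'X
    have cardA : (insert x C * X * B).card + (X' * B).card
        ≤ (C * X * B).card + (X * B).card := by
      have e1 : (insert x C * X * B).card
          = (x • (X * B) \ (C * X * B)).card + (C * X * B).card := by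
        rw [hCXB, ← card_sdiff_add_card]
      have e2 : (x • (X * B) \ (C * X * B)).card ≤ ((X * B) \ (X' * B)).card := by
        calc (x • (X * B) \ (C * X * B)).card ≤ (x • ((X * B) \ (X' * B))).card :=
              card_le_card hsub1
          _ = ((X * B) \ (X' * B)).card := card_smul_finset _ _
      have e3 : ((X * B) \ (X' * B)).card + (X' * B).card = (X * B).card :=
        card_sdiff_add_card_eq_card hX'BXB
      omega
    have cardC : (insert x C * X).card + Z₀.card = (C * X).card + X.card := by
      have e1 : (insert x C * X).card = (x • X \ (C * X)).card + (C * X).card := by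
        rw [hCX, ← card_sdiff_add_card]
      have e2 : x • X \ (C * X) = x • (X \ Z₀) := by
        ext w
        simp only [mem_sdiff, mem_smul_finset, smul_eq_mul, hZ₀def, mem_filter]
        constructor
        · rintro ⟨⟨z, hz, rfl⟩, hw⟩
          exact ⟨z, ⟨hz, fun h' => hw h'.2⟩, rfl⟩
        · rintro ⟨z, ⟨hz, hz2⟩, rfl⟩
          exact ⟨⟨z, hz, rfl⟩, fun hc => hz2 ⟨hz, hc⟩⟩
      have e3 : (X \ Z₀).card + Z₀.card = X.card :=
        card_sdiff_add_card_eq_card (filter_subset _ _)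
      rw [e1, e2, card_smul_finset]
      omega
    -- final arithmetic
    have hminX' := hmin X' hX'X
    have hZcard : Z₀.card ≤ X'.card := card_le_card hZ₀X'
    have key : (insert x C * X * B).card * X.card + (X' * B).card * X.card
        ≤ (X * B).card * (insert x C * X).card + (X' * B).card * X.card := by
      calc (insert x C * X * B).card * X.card + (X' * B).card * X.card
          = ((insert x C * X * B).card + (X' * B).card) * X.card := by ring
        _ ≤ ((C * X * B).card + (X * B).card) * X.card :=
            Nat.mul_le_mul_right _ cardA
        _ = (C * X * B).card * X.card + (X * B).card * X.card := by ring
        _ ≤ (X * B).card * (C * X).card + (X * B).card * X.card :=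
            Nat.add_le_add_right ih _
        _ = (X * B).card * ((C * X).card + X.card) := by ring
        _ = (X * B).card * ((insert x C * X).card + Z₀.card) := by rw [cardC]
        _ = (X * B).card * (insert x C * X).card + (X * B).card * Z₀.card := by ring
        _ ≤ (X * B).card * (insert x C * X).card + (X * B).card * X'.card := by
            exact Nat.add_le_add_left (Nat.mul_le_mul_left _ hZcard) _
        _ ≤ (X * B).card * (insert x C * X).card + (X' * B).card * X.card :=
            Nat.add_le_add_left hminX' _
    exact Nat.le_of_add_le_add_right key

set_option maxHeartbeats 2000000 in
theorem SaSbS_bound {G : Type*} [Group G] [DecidableEq G]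
    (S : Finset G) (hS : S.Nonempty) (K : ℝ) (hK : 1 ≤ K)
    (h : ∀ g : G, ((S * S.image (fun s => g⁻¹ * s * g)).card : ℝ) ≤ K * S.card) :
    ∀ a b : G, ((S * ({a} : Finset G) * S * ({b} : Finset G) * S).card : ℝ) ≤ K ^ 12 * S.card := by
  classical
  intro a b
  have hn : (0 : ℝ) < S.card := by exact_mod_cast hS.card_pos
  have hK0 : (0 : ℝ) < K := lt_of_lt_of_le one_pos hK
  -- |S * S| ≤ K n
  have hSS : ((S * S).card : ℝ) ≤ K * S.card := by
    have := h 1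
    simpa using this
  -- |S {y} S| ≤ K n
  have hL1 : ∀ y : G, ((S * {y} * S).card : ℝ) ≤ K * S.card := by
    intro y
    have hset : ({y} : Finset G) * S = S.image (fun s => y * s * y⁻¹) * {y} := by
      ext z
      simp only [mem_mul, mem_image, mem_singleton]
      constructor
      · rintro ⟨c, rfl, s, hs, rfl⟩
        exact ⟨c * s * c⁻¹, ⟨s, hs, rfl⟩, c, rfl, by group⟩
      · rintro ⟨w, ⟨s, hs, rfl⟩, c, rfl, rfl⟩
        exact ⟨c, rfl, s, hs, by group⟩
    have hcard : (S * {y} * S).card = (S * S.image (fun s => y * s * y⁻¹)).card := by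
      rw [mul_assoc, hset, ← mul_assoc, card_mul_singleton]
    rw [hcard]
    have := h y⁻¹
    simpa [inv_inv] using this
  -- |S⁻¹ {y} S| ≤ K^2 n
  have hL2 : ∀ y : G, ((S⁻¹ * {y} * S).card : ℝ) ≤ K ^ 2 * S.card := by
    intro y
    have h4 := ruzsa_triangle_inequality_invMul_mul_mul S S ({y} * S)
    -- #S * #(S⁻¹ * ({y} * S)) ≤ #(S * S) * #(S * ({y} * S))
    have hre : ((S.card : ℝ)) * ((S⁻¹ * {y} * S).card : ℝ)
        ≤ ((S * S).card : ℝ) * ((S * {y} * S).card : ℝ) := by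
      rw [mul_assoc S⁻¹, mul_assoc S]
      exact_mod_cast h4
    have := hre.trans (by
      have h1 := hSS
      have h2 := hL1 y
      have hx : (0:ℝ) ≤ ((S * {y} * S).card : ℝ) := by positivity
      nlinarith : ((S * S).card : ℝ) * ((S * {y} * S).card : ℝ) ≤ (K * S.card) * (K * S.card))
    nlinarith [this]
  -- Petridis minimizer
  obtain ⟨X, hXmem, hXmin⟩ := exists_min_image (S.powerset.erase ∅)
      (fun t => ((t * S).card : ℚ≥0) / t.card)
      ⟨S, mem_erase_of_ne_of_mem hS.ne_empty (mem_powerset_self _)⟩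
  rw [mem_erase, mem_powerset, ← nonempty_iff_ne_empty] at hXmem
  obtain ⟨hXne, hXsub⟩ := hXmem
  have hXpos : (0 : ℝ) < X.card := by exact_mod_cast hXne.card_pos
  have hmin : ∀ Z ⊆ X, (X * S).card * Z.card ≤ (Z * S).card * X.card := by
    intro Z hZ
    rcases Z.eq_empty_or_nonempty with rfl | hZne
    · simp
    · have hZS : Z ∈ S.powerset.erase ∅ :=
        mem_erase_of_ne_of_mem hZne.ne_empty (mem_powerset.mpr (hZ.trans hXsub))
      have := hXmin Z hZS
      rw [div_le_div_iff₀ (by exact_mod_cast hXne.card_pos)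
        (by exact_mod_cast hZne.card_pos)] at this
      exact_mod_cast this
  have hXSn : (S.card : ℝ) ≤ ((X * S).card : ℝ) := by
    exact_mod_cast card_le_card_mul_left hXne
  have hXSK : ((X * S).card : ℝ) ≤ K * X.card := by
    have hSmem : S ∈ S.powerset.erase ∅ :=
      mem_erase_of_ne_of_mem hS.ne_empty (mem_powerset_self _)
    have := hXmin S hSmem
    rw [div_le_div_iff₀ (by exact_mod_cast hXne.card_pos)
      (by exact_mod_cast hS.card_pos)] at this
    have hcross : ((X * S).card : ℝ) * S.card ≤ ((S * S).card : ℝ) * X.card := by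
      exact_mod_cast this
    have : ((X * S).card : ℝ) * S.card ≤ (K * X.card) * S.card := by
      calc ((X * S).card : ℝ) * S.card ≤ ((S * S).card : ℝ) * X.card := hcross
        _ ≤ (K * S.card) * X.card := by
            apply mul_le_mul_of_nonneg_right hSS (by positivity)
        _ = (K * X.card) * S.card := by ring
    exact le_of_mul_le_mul_right this hn
  have hXlarge : (S.card : ℝ) ≤ K * X.card := hXSn.trans hXSK
  -- Petridis conclusion, real form
  have hPet : ∀ C : Finset G, ((C * X * S).card : ℝ) ≤ K * (C * X).card := by
    intro C
    have hNat := petridis_ind X S hmin C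
    have hre : ((C * X * S).card : ℝ) * X.card ≤ ((X * S).card : ℝ) * (C * X).card := by
      exact_mod_cast hNat
    have : ((C * X * S).card : ℝ) * X.card ≤ (K * (C * X).card) * X.card := by
      calc ((C * X * S).card : ℝ) * X.card ≤ ((X * S).card : ℝ) * (C * X).card := hre
        _ ≤ (K * X.card) * (C * X).card := by
            apply mul_le_mul_of_nonneg_right hXSK (by positivity)
        _ = (K * (C * X).card) * X.card := by ring
    exact le_of_mul_le_mul_right this hXpos
  -- F5 : |S X S| ≤ K^2 n
  have hSX : ((S * X).card : ℝ) ≤ K * S.card := by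
    have : (S * X).card ≤ (S * S).card := card_le_card (mul_subset_mul_left hXsub)
    calc ((S * X).card : ℝ) ≤ ((S * S).card : ℝ) := by exact_mod_cast this
      _ ≤ K * S.card := hSS
  have hF5 : ((S * X * S).card : ℝ) ≤ K ^ 2 * S.card := by
    calc ((S * X * S).card : ℝ) ≤ K * (S * X).card := by exact hPet _
      _ ≤ K * (K * S.card) := by
          apply mul_le_mul_of_nonneg_left hSX (le_of_lt hK0)
      _ = K ^ 2 * S.card := by ring
  -- F6 : |S⁻¹ {f} X S| ≤ K^3 n
  have hF6 : ∀ f : G, ((S⁻¹ * {f} * X * S).card : ℝ) ≤ K ^ 3 * S.card := by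
    intro f
    have hmono : (S⁻¹ * {f} * X).card ≤ (S⁻¹ * {f} * S).card :=
      card_le_card (mul_subset_mul_left hXsub)
    calc ((S⁻¹ * {f} * X * S).card : ℝ) ≤ K * ((S⁻¹ * {f} * X).card : ℝ) :=
          by exact hPet _
      _ ≤ K * ((S⁻¹ * {f} * S).card : ℝ) := by
          apply mul_le_mul_of_nonneg_left (by exact_mod_cast hmono) (le_of_lt hK0)
      _ ≤ K * (K ^ 2 * S.card) := by
          apply mul_le_mul_of_nonneg_left (hL2 f) (le_of_lt hK0)
      _ = K ^ 3 * S.card := by ring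
  -- covering of S by translates of X / X
  have hKcond : ((S * X).card : ℝ) ≤ (K * K) * X.card := by
    calc ((S * X).card : ℝ) ≤ K * S.card := hSX
      _ ≤ K * (K * X.card) := by
          apply mul_le_mul_of_nonneg_left hXlarge (le_of_lt hK0)
      _ = (K * K) * X.card := by ring
  obtain ⟨F, hFsub, hFcard, hcov⟩ := ruzsa_covering_mul (A := S) hXne hKcond
  -- R := |S S⁻¹ S| ≤ K^7 n
  have hRsub : S * S⁻¹ * S ⊆ F.biUnion (fun f => S * (X / X) * {f⁻¹} * S) := by
    intro w hw
    rcases mem_mul.mp hw with ⟨d, hd, u, hu, rfl⟩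
    rcases mem_mul.mp hd with ⟨s, hs, ti, hti, rfl⟩
    rcases mem_inv.mp hti with ⟨t, ht, rfl⟩
    rcases mem_mul.mp (hcov ht) with ⟨f, hf, q, hq, rfl⟩
    refine mem_biUnion.mpr ⟨f, hf, ?_⟩
    have hqinv : q⁻¹ ∈ X / X := by
      rcases mem_div.mp hq with ⟨x1, hx1, x2, hx2, rfl⟩
      exact mem_div.mpr ⟨x2, hx2, x1, hx1, (inv_div x1 x2).symm⟩
    have : s * (f * q)⁻¹ * u = s * q⁻¹ * f⁻¹ * u := by group
    rw [this]
    exact mul_mem_mul (mul_mem_mul (mul_mem_mul hs hqinv) (mem_singleton_self f⁻¹)) hu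
  have hpiece : ∀ f : G, ((S * (X / X) * {f⁻¹} * S).card : ℝ) ≤ K ^ 5 * S.card := by
    intro f
    have hshape : S * (X / X) * ({f⁻¹} : Finset G) * S = (S * X) * (X⁻¹ * ({f⁻¹} * S)) := by
      rw [div_eq_mul_inv]
      simp only [mul_assoc]
    have h6 := ruzsa_triangle_inequality_mul_mul_invMul (S * X) S (X⁻¹ * ({f⁻¹} * S))
    have hCinv : ((X⁻¹ * (({f⁻¹} : Finset G) * S))⁻¹ * S).card = (S⁻¹ * {f} * X * S).card := by
      congr 1
      simp only [mul_inv_rev, inv_singleton, inv_inv, mul_assoc]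
    have hmain : ((S * (X / X) * {f⁻¹} * S).card : ℝ) * S.card
        ≤ ((S * X * S).card : ℝ) * ((S⁻¹ * {f} * X * S).card : ℝ) := by
      rw [hshape]
      have := h6
      rw [hCinv] at this
      exact_mod_cast this
    have hbound : ((S * (X / X) * {f⁻¹} * S).card : ℝ) * S.card
        ≤ (K ^ 5 * S.card) * S.card := by
      calc ((S * (X / X) * {f⁻¹} * S).card : ℝ) * S.card
          ≤ ((S * X * S).card : ℝ) * ((S⁻¹ * {f} * X * S).card : ℝ) := hmain
        _ ≤ (K ^ 2 * S.card) * (K ^ 3 * S.card) := by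
            apply mul_le_mul hF5 (hF6 f) (by positivity) (by positivity)
        _ = (K ^ 5 * S.card) * S.card := by ring
    exact le_of_mul_le_mul_right hbound hn
  have hR : ((S * S⁻¹ * S).card : ℝ) ≤ K ^ 7 * S.card := by
    have hcount : (S * S⁻¹ * S).card ≤ ∑ f ∈ F, (S * (X / X) * {f⁻¹} * S).card :=
      (card_le_card hRsub).trans card_biUnion_le
    calc ((S * S⁻¹ * S).card : ℝ)
        ≤ ∑ f ∈ F, ((S * (X / X) * {f⁻¹} * S).card : ℝ) := by exact_mod_cast hcount
      _ ≤ ∑ _f ∈ F, (K ^ 5 * S.card) := sum_le_sum (fun f _ => hpiece f)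
      _ = (F.card : ℝ) * (K ^ 5 * S.card) := by
          rw [sum_const, nsmul_eq_mul]
      _ ≤ (K * K) * (K ^ 5 * S.card) := by
          apply mul_le_mul_of_nonneg_right hFcard (by positivity)
      _ = K ^ 7 * S.card := by ring
  -- F10 : |S⁻¹ S ({b} S)| ≤ K^8 n
  have hF10 : ((S⁻¹ * S * ({b} * S)).card : ℝ) ≤ K ^ 8 * S.card := by
    have h3 := ruzsa_triangle_inequality_mulInv_mul_mul (S⁻¹ * S) S⁻¹ (({b} * S)⁻¹)
    rw [inv_inv] at h3
    have e3 : ((S⁻¹ * S) * S⁻¹).card = (S * S⁻¹ * S).card := by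
      rw [← card_inv ((S⁻¹ * S) * S⁻¹)]
      congr 1
      simp only [mul_inv_rev, inv_inv, mul_assoc]
    have e4 : ((({b} * S)⁻¹) * S⁻¹).card = (S * {b} * S).card := by
      rw [← card_inv ((({b} * S)⁻¹) * S⁻¹)]
      congr 1
      simp only [mul_inv_rev, inv_inv, mul_assoc]
    rw [e3, e4, card_inv] at h3
    have hre : ((S⁻¹ * S * ({b} * S)).card : ℝ) * S.card
        ≤ ((S * S⁻¹ * S).card : ℝ) * ((S * {b} * S).card : ℝ) := by
      exact_mod_cast h3
    have : ((S⁻¹ * S * ({b} * S)).card : ℝ) * S.card ≤ (K ^ 8 * S.card) * S.card := by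
      calc ((S⁻¹ * S * ({b} * S)).card : ℝ) * S.card
          ≤ ((S * S⁻¹ * S).card : ℝ) * ((S * {b} * S).card : ℝ) := hre
        _ ≤ (K ^ 7 * S.card) * (K * S.card) := by
            apply mul_le_mul hR (hL1 b) (by positivity) (by positivity)
        _ = (K ^ 8 * S.card) * S.card := by ring
    exact le_of_mul_le_mul_right this hn
  -- final assembly
  have h6f := ruzsa_triangle_inequality_mul_mul_invMul S ({a} * S) (({a} * S) * ({b} * S))
  have e5 : (S * (({a} * S) * ({b} * S))).card = (S * {a} * S * {b} * S).card := by
    congr 1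
    simp only [mul_assoc]
  have e6 : (({a} : Finset G) * S).card = S.card := card_singleton_mul _ _
  have e7 : (S * ({a} * S)).card = (S * {a} * S).card := by
    congr 1
    simp only [mul_assoc]
  have hsetinv : ((({a} * S) * ({b} * S))⁻¹ * ({a} * S))⁻¹ = S⁻¹ * S * ({b} * S) := by
    simp only [mul_inv_rev, inv_inv, inv_singleton, mul_assoc]
    congr 1
    rw [← mul_assoc ({a⁻¹} : Finset G) ({a} : Finset G), singleton_mul_singleton,
      inv_mul_cancel, singleton_one, one_mul]
  have e8 : ((({a} * S) * ({b} * S))⁻¹ * ({a} * S)).card = (S⁻¹ * S * ({b} * S)).card := by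
    rw [← hsetinv, card_inv]
  rw [e5, e6, e7, e8] at h6f
  have hfinal : ((S * {a} * S * {b} * S).card : ℝ) * S.card
      ≤ (K ^ 9 * S.card) * S.card := by
    calc ((S * {a} * S * {b} * S).card : ℝ) * S.card
        ≤ ((S * {a} * S).card : ℝ) * ((S⁻¹ * S * ({b} * S)).card : ℝ) := by
          exact_mod_cast h6f
      _ ≤ (K * S.card) * (K ^ 8 * S.card) := by
          apply mul_le_mul (hL1 a) hF10 (by positivity) (by positivity)
      _ = (K ^ 9 * S.card) * S.card := by ring
  have hP : ((S * {a} * S * {b} * S).card : ℝ) ≤ K ^ 9 * S.card :=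
    le_of_mul_le_mul_right hfinal hn
  calc ((S * {a} * S * {b} * S).card : ℝ) ≤ K ^ 9 * S.card := hP
    _ ≤ K ^ 12 * S.card := by
        apply mul_le_mul_of_nonneg_right (pow_le_pow_right₀ hK (by norm_num)) (le_of_lt hn)
end

section
/- Let S be a finite nonempty subset of a group G and K ≥ 1 a real such that |S * g⁻¹Sg| ≤ K|S| for every g ∈ G. Then |S₁*S₂*S₃| ≤ K¹⁴|S| whenever each Sᵢ is a conjugate of S or a conjugate of S⁻¹ (i.e., Sᵢ = gᵢ⁻¹ S gᵢ or Sᵢ = gᵢ⁻¹ S⁻¹ gᵢ for some gᵢ ∈ G). -/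
open Finset Pointwise


namespace ThreeConjAux
variable {G : Type*} [Group G] [DecidableEq G]
set_option linter.unusedSectionVars false
set_option maxHeartbeats 1000000

variable {G : Type*} [Group G] [DecidableEq G]
set_option linter.unusedSectionVars false
set_option maxHeartbeats 1000000

/-- conjugate of a finset: `cj g A = g⁻¹ A g`. -/
def cj (g : G) (A : Finset G) : Finset G := A.image fun s => g⁻¹ * s * g

lemma cj_image_eq (g : G) (A : Finset G) : cj g A = A.image ⇑(MulAut.conj g⁻¹) := by
  simp [cj, MulAut.conj]

lemma conj_inj (g : G) : Function.Injective (fun s : G => g⁻¹ * s * g) :=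
  fun a b h => by simpa using h

lemma card_cj (g : G) (A : Finset G) : #(cj g A) = #A :=
  card_image_of_injective _ (conj_inj g)

lemma cj_mul (g : G) (A B : Finset G) : cj g A * cj g B = cj g (A * B) := by
  simp [cj_image_eq, image_mul]

lemma cj_cj (g h : G) (A : Finset G) : cj g (cj h A) = cj (h * g) A := by
  simp only [cj, image_image]
  apply image_congr
  intro x _
  simp [mul_assoc]

lemma cj_one (A : Finset G) : cj 1 A = A := by simp [cj]

lemma cj_inv (g : G) (A : Finset G) : cj g A⁻¹ = (cj g A)⁻¹ := by
  simp [cj_image_eq, image_inv]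

lemma mem_cj {g x : G} {A : Finset G} : x ∈ cj g A ↔ ∃ s ∈ A, g⁻¹ * s * g = x := by
  simp [cj]

lemma cj_def (g : G) (A : Finset G) : cj g A = {g⁻¹} * A * {g} := by
  ext x
  simp only [mem_cj, mem_mul, mem_singleton]
  constructor
  · rintro ⟨s, hs, rfl⟩
    exact ⟨g⁻¹ * s, ⟨g⁻¹, rfl, s, hs, rfl⟩, g, rfl, rfl⟩
  · rintro ⟨y, ⟨a, rfl, s, hs, rfl⟩, b, rfl, rfl⟩
    exact ⟨s, hs, rfl⟩

lemma singleton_mul_cj (f r : G) (A : Finset G) :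
    {f} * cj r A = cj (r * f⁻¹) A * {f} := by
  ext x
  simp only [mem_mul, mem_cj, mem_singleton]
  constructor
  · rintro ⟨a, ha, y, ⟨s, hs, rfl⟩, rfl⟩
    subst ha
    exact ⟨(r * a⁻¹)⁻¹ * s * (r * a⁻¹), ⟨s, hs, rfl⟩, a, rfl, by
      simp [mul_assoc]⟩
  · rintro ⟨y, ⟨s, hs, rfl⟩, b, hb, rfl⟩
    subst hb
    exact ⟨b, rfl, r⁻¹ * s * r, ⟨s, hs, rfl⟩, by simp [mul_assoc]⟩

lemma card_singleton_mul' (a : G) (A : Finset G) : #({a} * A) = #A := by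
  rw [singleton_mul]
  exact card_image_of_injective _ (mul_right_injective a)

lemma cj_nonempty (g : G) {A : Finset G} (h : A.Nonempty) : (cj g A).Nonempty :=
  h.image _



/-- Right-handed noncommutative Petridis inequality. -/
lemma petridis (Z S : Finset G)
    (hmin : ∀ Y ⊆ Z, #(Z * S) * #Y ≤ #(Y * S) * #Z) :
    ∀ C : Finset G, #(C * Z * S) * #Z ≤ #(Z * S) * #(C * Z) := by
  intro C
  induction C using Finset.induction_on with
  | empty => simp
  | @insert γ C hγ ih =>
    classical
    set Z₁ : Finset G := Z.filter (fun z => ({γ * z} : Finset G) * S ⊆ C * Z * S) with hZ₁def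
    set Z₂ : Finset G := Z.filter (fun z => γ * z ∈ C * Z) with hZ₂def
    have h21 : Z₂ ⊆ Z₁ := by
      intro z hz
      rw [hZ₂def, mem_filter] at hz
      rw [hZ₁def, mem_filter]
      refine ⟨hz.1, ?_⟩
      exact mul_subset_mul_right (singleton_subset_iff.2 hz.2)
    have hsplit : (insert γ C) * Z = C * Z ∪ {γ} * Z := by
      rw [insert_eq, union_mul, union_comm]
    have hsplitS : (insert γ C) * Z * S = C * Z * S ∪ {γ} * Z * S := by
      rw [hsplit, union_mul]
    -- key1
    have hsub1 : {γ} * Z₁ * S ⊆ C * Z * S := by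
      intro x hx
      rw [mul_assoc] at hx
      obtain ⟨a, ha, y, hy, rfl⟩ := mem_mul.1 hx
      rw [mem_singleton] at ha
      subst ha
      obtain ⟨z, hz, s, hs, rfl⟩ := mem_mul.1 hy
      rw [hZ₁def, mem_filter] at hz
      refine hz.2 ?_
      rw [← mul_assoc]
      exact mul_mem_mul (mem_singleton_self _) hs
    have hmono1 : {γ} * Z₁ * S ⊆ {γ} * Z * S :=
      mul_subset_mul_right (mul_subset_mul_left (filter_subset _ _))
    have key1 : #((insert γ C) * Z * S) + #(Z₁ * S) ≤ #(C * Z * S) + #(Z * S) := by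
      have hU : (insert γ C) * Z * S ⊆ C * Z * S ∪ (({γ} * Z * S) \ ({γ} * Z₁ * S)) := by
        intro x hx
        rw [hsplitS, mem_union] at hx
        rcases hx with hx | hx
        · exact mem_union_left _ hx
        · by_cases hx1 : x ∈ {γ} * Z₁ * S
          · exact mem_union_left _ (hsub1 hx1)
          · exact mem_union_right _ (mem_sdiff.2 ⟨hx, hx1⟩)
      have h1 : #((insert γ C) * Z * S) ≤ #(C * Z * S) + (#({γ} * Z * S) - #({γ} * Z₁ * S)) := by
        refine (card_le_card hU).trans ?_
        refine (card_union_le _ _).trans ?_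
        rw [card_sdiff_of_subset hmono1]
      have e1 : #({γ} * Z * S) = #(Z * S) := by rw [mul_assoc]; exact card_singleton_mul' _ _
      have e2 : #({γ} * Z₁ * S) = #(Z₁ * S) := by rw [mul_assoc]; exact card_singleton_mul' _ _
      have hle : #(Z₁ * S) ≤ #(Z * S) := by
        rw [← e1, ← e2]; exact card_le_card hmono1
      omega
    have key2 : #((insert γ C) * Z) + #Z₂ = #(C * Z) + #Z := by
      have hinter : C * Z ∩ ({γ} * Z) = {γ} * Z₂ := by
        ext x
        constructor
        · intro hx
          obtain ⟨hcz, hgz⟩ := mem_inter.1 hx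
          obtain ⟨a, ha, z, hz, rfl⟩ := mem_mul.1 hgz
          rw [mem_singleton] at ha
          subst ha
          exact mem_mul.2 ⟨a, mem_singleton_self _, z, mem_filter.2 ⟨hz, hcz⟩, rfl⟩
        · intro hx
          obtain ⟨a, ha, z, hz, rfl⟩ := mem_mul.1 hx
          rw [mem_singleton] at ha
          subst ha
          rw [hZ₂def, mem_filter] at hz
          exact mem_inter.2 ⟨hz.2, mem_mul.2 ⟨a, mem_singleton_self _, z, hz.1, rfl⟩⟩
      have := card_union_add_card_inter (C * Z) ({γ} * Z)
      rw [hinter, ← hsplit, card_singleton_mul', card_singleton_mul'] at this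
      omega
    have hZ1 : #(Z * S) * #Z₁ ≤ #(Z₁ * S) * #Z := hmin Z₁ (filter_subset _ _)
    have h12 : #Z₂ ≤ #Z₁ := card_le_card h21
    -- final arithmetic
    nlinarith [Nat.mul_le_mul_right #Z key1, ih, hZ1,
      Nat.mul_le_mul_left #(Z * S) h12, key2, Nat.mul_le_mul_left #(Z * S) key2.le]


lemma exists_minimizer (S : Finset G) (hS : S.Nonempty) :
    ∃ Z, Z ⊆ S ∧ Z.Nonempty ∧ ∀ Y ⊆ S, #(Z * S) * #Y ≤ #(Y * S) * #Z := by
  classical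
  have hne : (S.powerset.filter (·.Nonempty)).Nonempty :=
    ⟨S, mem_filter.2 ⟨mem_powerset_self S, hS⟩⟩
  obtain ⟨Z, hZmem, hZmin⟩ := (S.powerset.filter (·.Nonempty)).exists_min_image
    (fun Y => (#(Y * S) : ℝ) / #Y) hne
  rw [mem_filter, mem_powerset] at hZmem
  refine ⟨Z, hZmem.1, hZmem.2, fun Y hY => ?_⟩
  rcases Y.eq_empty_or_nonempty with rfl | hYne
  · simp
  have h := hZmin Y (mem_filter.2 ⟨mem_powerset.2 hY, hYne⟩)
  have hZpos : (0 : ℝ) < #Z := by exact_mod_cast card_pos.2 hZmem.2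
  have hYpos : (0 : ℝ) < #Y := by exact_mod_cast card_pos.2 hYne
  rw [div_le_div_iff₀ hZpos hYpos] at h
  exact_mod_cast h

lemma mirror_covering (Z S : Finset G) (hZ : Z.Nonempty) (hS : S.Nonempty) :
    ∃ F, F ⊆ S ∧ (#F : ℝ) * #Z ≤ #(Z * S) ∧ S ⊆ Z⁻¹ * Z * F := by
  classical
  have hZipos : (0 : ℝ) < #(Z⁻¹) := by
    rw [card_inv]; exact_mod_cast card_pos.2 hZ
  have hK : (#(S⁻¹ * Z⁻¹) : ℝ) ≤ ((#(Z * S) : ℝ) / #Z) * #(Z⁻¹) := by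
    rw [← mul_inv_rev, card_inv, card_inv]
    rw [div_mul_cancel₀]
    positivity
  obtain ⟨F, hFsub, hFcard, hcov⟩ := Finset.ruzsa_covering_mul (hZ.inv) hK
  refine ⟨F⁻¹, ?_, ?_, ?_⟩
  · intro x hx
    rw [mem_inv] at hx
    obtain ⟨y, hy, rfl⟩ := hx
    have := hFsub hy
    rw [mem_inv] at this
    obtain ⟨s, hs, hsy⟩ := this
    rw [← hsy, inv_inv]
    exact hs
  · rw [card_inv]
    have hZpos : (0 : ℝ) < #Z := by exact_mod_cast card_pos.2 hZ
    calc (#F : ℝ) * #Z ≤ ((#(Z * S) : ℝ) / #Z) * #Z := by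
          apply mul_le_mul_of_nonneg_right hFcard hZpos.le
      _ = #(Z * S) := div_mul_cancel₀ _ hZpos.ne'
  · intro x hx
    have hxinv : x⁻¹ ∈ S⁻¹ := inv_mem_inv hx
    have := hcov hxinv
    obtain ⟨f, hf, d, hd, hfd⟩ := mem_mul.1 this
    obtain ⟨a, ha, b, hb, hab⟩ := mem_div.1 hd
    -- x⁻¹ = f * (a / b) with a b ∈ Z⁻¹, f ∈ F ; so x = (a/b)⁻¹ * f⁻¹ = b * a⁻¹ * f⁻¹
    rw [mem_inv] at ha hb
    obtain ⟨a', ha', rfl⟩ := ha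
    obtain ⟨b', hb', rfl⟩ := hb
    have h1 : x⁻¹ = f * (a'⁻¹ / b'⁻¹) := by rw [hab]; exact hfd.symm
    have hx' : x = b'⁻¹ * a' * f⁻¹ := by
      rw [← inv_inv x, h1]
      simp [div_eq_mul_inv, mul_inv_rev, mul_assoc]
    rw [hx']
    exact mul_mem_mul (mul_mem_mul (inv_mem_inv hb') ha') (inv_mem_inv hf)


lemma card_mul_singleton' (a : G) (A : Finset G) : #(A * {a}) = #A := by
  rw [mul_singleton]
  exact card_image_of_injective _ (mul_left_injective a)

private lemma cancel_right {c a b : ℝ} (hn0 : 0 < c) (h : a * c ≤ b * c) : a ≤ b :=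
  le_of_mul_le_mul_right h hn0

lemma main_core (S : Finset G) (K : ℝ) (hS : S.Nonempty) (hK : 1 ≤ K)
    (h : ∀ g : G, (#(S * cj g S) : ℝ) ≤ K * #S)
    (S₁ S₂ S₃ : Finset G)
    (h₁ : ∃ g : G, S₁ = cj g S ∨ S₁ = (cj g S)⁻¹)
    (h₂ : ∃ g : G, S₂ = cj g S ∨ S₂ = (cj g S)⁻¹)
    (h₃ : ∃ g : G, S₃ = cj g S ∨ S₃ = (cj g S)⁻¹) :
    (#(S₁ * S₂ * S₃) : ℝ) ≤ K ^ 14 * #S := by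
  classical
  have hn0 : (0 : ℝ) < (#S : ℝ) := by exact_mod_cast card_pos.2 hS
  have hK0 : (0 : ℝ) < K := lt_of_lt_of_le one_pos hK
  -- pair bounds
  have pp : ∀ u v : G, (#(cj u S * cj v S) : ℝ) ≤ K * (#S : ℝ) := by
    intro u v
    have he : cj u S * cj v S = cj u (S * cj (v * u⁻¹) S) := by
      rw [← cj_mul]
      congr 1
      rw [cj_cj]
      congr 1
      group
    rw [he, card_cj]
    exact h _
  have pp1 : ∀ u : G, (#(cj u S * S) : ℝ) ≤ K * (#S : ℝ) := by
    intro u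
    have := pp u 1
    rwa [cj_one] at this
  have pp2 : ∀ v : G, (#(S * cj v S) : ℝ) ≤ K * (#S : ℝ) := h
  have hSS : (#(S * S) : ℝ) ≤ K * (#S : ℝ) := by
    have := h 1
    rwa [cj_one] at this
  have mp : ∀ u v : G, (#((cj u S)⁻¹ * cj v S) : ℝ) ≤ K ^ 2 * (#S : ℝ) := by
    intro u v
    refine cancel_right hn0 ?_
    calc (#((cj u S)⁻¹ * cj v S) : ℝ) * (#S : ℝ)
        = ((#S * #((cj u S)⁻¹ * cj v S) : ℕ) : ℝ) := by push_cast; ring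
      _ ≤ ((#(S * cj u S) * #(S * cj v S) : ℕ) : ℝ) := by
          exact_mod_cast ruzsa_triangle_inequality_invMul_mul_mul (cj u S) S (cj v S)
      _ ≤ (K * (#S : ℝ)) * (K * (#S : ℝ)) := by
          push_cast
          exact mul_le_mul (pp2 u) (pp2 v) (by positivity) (by positivity)
      _ = K ^ 2 * (#S : ℝ) * (#S : ℝ) := by ring
  have mp1 : ∀ v : G, (#((cj v S)⁻¹ * S) : ℝ) ≤ K ^ 2 * (#S : ℝ) := by
    intro v
    have := mp v 1
    rwa [cj_one] at this
  -- minimizer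
  obtain ⟨Z, hZS, hZne, hZmin⟩ := exists_minimizer S hS
  have hz0 : (0 : ℝ) < (#Z : ℝ) := by exact_mod_cast card_pos.2 hZne
  have hm0 : (0 : ℝ) < (#(Z * S) : ℝ) := by
    have : (Z * S).Nonempty := hZne.mul hS
    exact_mod_cast card_pos.2 this
  have hmz : (#(Z * S) : ℝ) ≤ K * (#Z : ℝ) := by
    refine cancel_right hn0 ?_
    calc (#(Z * S) : ℝ) * (#S : ℝ) = ((#(Z * S) * #S : ℕ) : ℝ) := by push_cast; ring
      _ ≤ ((#(S * S) * #Z : ℕ) : ℝ) := by exact_mod_cast hZmin S subset_rfl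
      _ ≤ (K * (#S : ℝ)) * (#Z : ℝ) := by
          push_cast
          exact mul_le_mul_of_nonneg_right hSS hz0.le
      _ = K * (#Z : ℝ) * (#S : ℝ) := by ring
  have hpet : ∀ C : Finset G, (#(C * Z * S) : ℝ) * (#Z : ℝ) ≤ (#(Z * S) : ℝ) * (#(C * Z) : ℝ) := by
    intro C
    have := petridis Z S (fun Y hY => hZmin Y (hY.trans hZS)) C
    exact_mod_cast this
  -- strip lemmas
  have stripP : ∀ (C : Finset G) (v : G),
      (#(C * Z * cj v S) : ℝ) * (#Z : ℝ) ≤ K ^ 2 * (#(Z * S) : ℝ) * (#(C * Z) : ℝ) := by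
    intro C v
    refine cancel_right hn0 ?_
    calc (#(C * Z * cj v S) : ℝ) * (#Z : ℝ) * (#S : ℝ)
        = ((#(C * Z * cj v S) * #S : ℕ) : ℝ) * (#Z : ℝ) := by push_cast; ring
      _ ≤ ((#(C * Z * S) * #((cj v S)⁻¹ * S) : ℕ) : ℝ) * (#Z : ℝ) := by
          have := ruzsa_triangle_inequality_mul_mul_invMul (C * Z) S (cj v S)
          have h' : ((#(C * Z * cj v S) * #S : ℕ) : ℝ) ≤
              ((#(C * Z * S) * #((cj v S)⁻¹ * S) : ℕ) : ℝ) := by exact_mod_cast this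
          exact mul_le_mul_of_nonneg_right h' hz0.le
      _ = ((#(C * Z * S) : ℝ) * (#Z : ℝ)) * (#((cj v S)⁻¹ * S) : ℝ) := by push_cast; ring
      _ ≤ ((#(Z * S) : ℝ) * (#(C * Z) : ℝ)) * (K ^ 2 * (#S : ℝ)) := by
          exact mul_le_mul (hpet C) (mp1 v) (by positivity) (by positivity)
      _ = K ^ 2 * (#(Z * S) : ℝ) * (#(C * Z) : ℝ) * (#S : ℝ) := by ring
  have stripM : ∀ (C : Finset G) (v : G),
      (#(C * Z * (cj v S)⁻¹) : ℝ) * (#Z : ℝ) ≤ K * (#(Z * S) : ℝ) * (#(C * Z) : ℝ) := by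
    intro C v
    refine cancel_right hn0 ?_
    calc (#(C * Z * (cj v S)⁻¹) : ℝ) * (#Z : ℝ) * (#S : ℝ)
        = ((#(C * Z * (cj v S)⁻¹) * #S : ℕ) : ℝ) * (#Z : ℝ) := by push_cast; ring
      _ ≤ ((#(C * Z * S) * #(cj v S * S) : ℕ) : ℝ) * (#Z : ℝ) := by
          have := ruzsa_triangle_inequality_mulInv_mul_mul (C * Z) S (cj v S)
          have h' : ((#(C * Z * (cj v S)⁻¹) * #S : ℕ) : ℝ) ≤
              ((#(C * Z * S) * #(cj v S * S) : ℕ) : ℝ) := by exact_mod_cast this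
          exact mul_le_mul_of_nonneg_right h' hz0.le
      _ = ((#(C * Z * S) : ℝ) * (#Z : ℝ)) * (#(cj v S * S) : ℝ) := by push_cast; ring
      _ ≤ ((#(Z * S) : ℝ) * (#(C * Z) : ℝ)) * (K * (#S : ℝ)) := by
          exact mul_le_mul (hpet C) (pp1 v) (by positivity) (by positivity)
      _ = K * (#(Z * S) : ℝ) * (#(C * Z) : ℝ) * (#S : ℝ) := by ring
  have hSZ : (#(S * Z) : ℝ) ≤ K * (#S : ℝ) := by
    have hsub : S * Z ⊆ S * S := mul_subset_mul_left hZS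
    calc (#(S * Z) : ℝ) ≤ (#(S * S) : ℝ) := by exact_mod_cast card_le_card hsub
      _ ≤ K * (#S : ℝ) := hSS
  -- the Q bound
  have Qb : ∀ p r : G, (#(cj p S * Z⁻¹ * Z * cj r S) : ℝ) ≤ K ^ 7 * (#S : ℝ) := by
    intro p r
    have hA : (Z * (cj p S)⁻¹)⁻¹ = cj p S * Z⁻¹ := by
      rw [mul_inv_rev, inv_inv]
    have hr := ruzsa_triangle_inequality_invMul_invMul_invMul
      (Z * (cj p S)⁻¹) S⁻¹ (Z * cj r S)
    rw [hA, inv_inv, card_inv] at hr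
    -- hr : #S * #((cj p S * Z⁻¹) * (Z * cj r S)) ≤ #(S * (Z * (cj p S)⁻¹)) * #(S * (Z * cj r S))
    have e1 : cj p S * Z⁻¹ * (Z * cj r S) = cj p S * Z⁻¹ * Z * cj r S := by
      rw [mul_assoc (cj p S * Z⁻¹)]
    have e2 : S * (Z * (cj p S)⁻¹) = S * Z * (cj p S)⁻¹ := by rw [mul_assoc]
    have e3 : S * (Z * cj r S) = S * Z * cj r S := by rw [mul_assoc]
    rw [e1, e2, e3] at hr
    have c1 : (#(S * Z * (cj p S)⁻¹) : ℝ) * (#Z : ℝ) ≤ K * (#(Z * S) : ℝ) * (K * (#S : ℝ)) := by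
      refine (stripM S p).trans ?_
      exact mul_le_mul_of_nonneg_left hSZ (by positivity)
    have c2 : (#(S * Z * cj r S) : ℝ) * (#Z : ℝ) ≤ K ^ 2 * (#(Z * S) : ℝ) * (K * (#S : ℝ)) := by
      refine (stripP S r).trans ?_
      exact mul_le_mul_of_nonneg_left hSZ (by positivity)
    -- combine
    have hr' : (#S : ℝ) * (#(cj p S * Z⁻¹ * Z * cj r S) : ℝ) ≤
        (#(S * Z * (cj p S)⁻¹) : ℝ) * (#(S * Z * cj r S) : ℝ) := by exact_mod_cast hr
    have hmain : (#(cj p S * Z⁻¹ * Z * cj r S) : ℝ) * ((#S : ℝ) * (#Z : ℝ) * (#Z : ℝ)) ≤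
        (K * (#(Z * S) : ℝ) * (K * (#S : ℝ))) * (K ^ 2 * (#(Z * S) : ℝ) * (K * (#S : ℝ))) := by
      calc (#(cj p S * Z⁻¹ * Z * cj r S) : ℝ) * ((#S : ℝ) * (#Z : ℝ) * (#Z : ℝ))
          = ((#S : ℝ) * (#(cj p S * Z⁻¹ * Z * cj r S) : ℝ)) * (#Z : ℝ) * (#Z : ℝ) := by ring
        _ ≤ ((#(S * Z * (cj p S)⁻¹) : ℝ) * (#(S * Z * cj r S) : ℝ)) * (#Z : ℝ) * (#Z : ℝ) := by
            have := mul_le_mul_of_nonneg_right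
              (mul_le_mul_of_nonneg_right hr' hz0.le) hz0.le
            exact this
        _ = ((#(S * Z * (cj p S)⁻¹) : ℝ) * (#Z : ℝ)) * ((#(S * Z * cj r S) : ℝ) * (#Z : ℝ)) := by ring
        _ ≤ (K * (#(Z * S) : ℝ) * (K * (#S : ℝ))) * (K ^ 2 * (#(Z * S) : ℝ) * (K * (#S : ℝ))) := by
            exact mul_le_mul c1 c2 (by positivity) (by positivity)
    have hmK2 : (#(Z * S) : ℝ) * (#(Z * S) : ℝ) ≤ (K * (#Z : ℝ)) * (K * (#Z : ℝ)) :=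
      mul_le_mul hmz hmz hm0.le (by positivity)
    -- conclude
    have : (#(cj p S * Z⁻¹ * Z * cj r S) : ℝ) * ((#S : ℝ) * (#Z : ℝ) * (#Z : ℝ)) ≤
        K ^ 7 * (#S : ℝ) * ((#S : ℝ) * (#Z : ℝ) * (#Z : ℝ)) := by
      calc (#(cj p S * Z⁻¹ * Z * cj r S) : ℝ) * ((#S : ℝ) * (#Z : ℝ) * (#Z : ℝ))
          ≤ (K * (#(Z * S) : ℝ) * (K * (#S : ℝ))) * (K ^ 2 * (#(Z * S) : ℝ) * (K * (#S : ℝ))) := hmain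
        _ = K ^ 5 * ((#(Z * S) : ℝ) * (#(Z * S) : ℝ)) * ((#S : ℝ) * (#S : ℝ)) := by ring
        _ ≤ K ^ 5 * ((K * (#Z : ℝ)) * (K * (#Z : ℝ))) * ((#S : ℝ) * (#S : ℝ)) := by
            have h5 : (0:ℝ) ≤ K ^ 5 := by positivity
            have := mul_le_mul_of_nonneg_left hmK2 h5
            exact mul_le_mul_of_nonneg_right this (by positivity)
        _ = K ^ 7 * (#S : ℝ) * ((#S : ℝ) * (#Z : ℝ) * (#Z : ℝ)) := by ring
    exact le_of_mul_le_mul_right this (by positivity)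
  -- covering
  obtain ⟨F, hFS, hFcard, hcov⟩ := mirror_covering Z S hZne hS
  have hFK : (#F : ℝ) ≤ K := by
    refine le_of_mul_le_mul_right ?_ hz0
    calc (#F : ℝ) * (#Z : ℝ) ≤ (#(Z * S) : ℝ) := hFcard
      _ ≤ K * (#Z : ℝ) := hmz
  -- middle-S triple bound
  have Mmid : ∀ p r : G, (#(cj p S * S * cj r S) : ℝ) ≤ K ^ 8 * (#S : ℝ) := by
    intro p r
    have hsub : cj p S * S * cj r S ⊆
        F.biUnion (fun f => cj p S * Z⁻¹ * Z * ({f} * cj r S)) := by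
      intro x hx
      obtain ⟨y, hy, c, hc, rfl⟩ := mem_mul.1 hx
      obtain ⟨a, ha, s, hs, rfl⟩ := mem_mul.1 hy
      have hsZ := hcov hs
      obtain ⟨w, hw, f, hf, rfl⟩ := mem_mul.1 hsZ
      obtain ⟨w1, hw1, w2, hw2, rfl⟩ := mem_mul.1 hw
      refine mem_biUnion.2 ⟨f, hf, ?_⟩
      have hx' : a * (w1 * w2 * f) * c = a * w1 * w2 * (f * c) := by
        simp [mul_assoc]
      rw [hx']
      exact mul_mem_mul (mul_mem_mul (mul_mem_mul ha hw1) hw2)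
        (mul_mem_mul (mem_singleton_self f) hc)
    have hcard : #(cj p S * S * cj r S) ≤
        ∑ f ∈ F, #(cj p S * Z⁻¹ * Z * ({f} * cj r S)) :=
      (card_le_card hsub).trans (card_biUnion_le)
    have hterm : ∀ f : G, (#(cj p S * Z⁻¹ * Z * ({f} * cj r S)) : ℝ) ≤ K ^ 7 * (#S : ℝ) := by
      intro f
      have he : cj p S * Z⁻¹ * Z * ({f} * cj r S)
          = cj p S * Z⁻¹ * Z * cj (r * f⁻¹) S * {f} := by
        rw [singleton_mul_cj]
        simp only [mul_assoc]
      rw [he, card_mul_singleton']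
      exact Qb p (r * f⁻¹)
    calc (#(cj p S * S * cj r S) : ℝ)
        ≤ ((∑ f ∈ F, #(cj p S * Z⁻¹ * Z * ({f} * cj r S)) : ℕ) : ℝ) := by
          exact_mod_cast hcard
      _ = ∑ f ∈ F, (#(cj p S * Z⁻¹ * Z * ({f} * cj r S)) : ℝ) := by push_cast; rfl
      _ ≤ ∑ _f ∈ F, K ^ 7 * (#S : ℝ) := by
          exact Finset.sum_le_sum fun f _ => hterm f
      _ = (#F : ℝ) * (K ^ 7 * (#S : ℝ)) := by
          rw [Finset.sum_const, nsmul_eq_mul]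
      _ ≤ K * (K ^ 7 * (#S : ℝ)) := by
          exact mul_le_mul_of_nonneg_right hFK (by positivity)
      _ = K ^ 8 * (#S : ℝ) := by ring
  -- general all-plus triple
  have M3 : ∀ a b c : G, (#(cj a S * cj b S * cj c S) : ℝ) ≤ K ^ 8 * (#S : ℝ) := by
    intro a b c
    have he : cj b (cj (a * b⁻¹) S * S * cj (c * b⁻¹) S) = cj a S * cj b S * cj c S := by
      rw [← cj_mul, ← cj_mul, cj_cj, cj_cj, inv_mul_cancel_right, inv_mul_cancel_right]
    rw [← he, card_cj]
    exact Mmid _ _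
  have M31 : ∀ b c : G, (#(S * cj b S * cj c S) : ℝ) ≤ K ^ 8 * (#S : ℝ) := by
    intro b c
    have := M3 1 b c
    rwa [cj_one] at this
  -- middle-inverse triple
  have R3 : ∀ u v w : G, (#(cj u S * (cj v S)⁻¹ * cj w S) : ℝ) ≤ K ^ 10 * (#S : ℝ) := by
    intro u v w
    have hC : ((cj v S)⁻¹ * cj w S)⁻¹ = (cj w S)⁻¹ * cj v S := by
      rw [mul_inv_rev, inv_inv]
    have hr := ruzsa_triangle_inequality_mul_mul_invMul
      (cj u S) (cj v S) ((cj v S)⁻¹ * cj w S)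
    rw [hC] at hr
    have e1 : cj u S * ((cj v S)⁻¹ * cj w S) = cj u S * (cj v S)⁻¹ * cj w S := by
      rw [mul_assoc]
    rw [e1] at hr
    -- hr : #(cj u S * (cj v S)⁻¹ * cj w S) * #(cj v S) ≤
    --      #(cj u S * cj v S) * #((cj w S)⁻¹ * cj v S * cj v S)
    have hB : (#(cj v S) : ℝ) = (#S : ℝ) := by rw [card_cj]
    have hwvv : (#((cj w S)⁻¹ * cj v S * cj v S) : ℝ) ≤ K ^ 9 * (#S : ℝ) := by
      refine cancel_right hn0 ?_
      have e2 : (cj w S)⁻¹ * cj v S * cj v S = (cj w S)⁻¹ * (cj v S * cj v S) := by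
        rw [mul_assoc]
      rw [e2]
      calc (#((cj w S)⁻¹ * (cj v S * cj v S)) : ℝ) * (#S : ℝ)
          = ((#S * #((cj w S)⁻¹ * (cj v S * cj v S)) : ℕ) : ℝ) := by push_cast; ring
        _ ≤ ((#(S * cj w S) * #(S * (cj v S * cj v S)) : ℕ) : ℝ) := by
            exact_mod_cast ruzsa_triangle_inequality_invMul_mul_mul
              (cj w S) S (cj v S * cj v S)
        _ = (#(S * cj w S) : ℝ) * (#(S * cj v S * cj v S) : ℝ) := by
            rw [← mul_assoc S (cj v S) (cj v S)]
            push_cast; ring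
        _ ≤ (K * (#S : ℝ)) * (K ^ 8 * (#S : ℝ)) := by
            exact mul_le_mul (pp2 w) (M31 v v) (by positivity) (by positivity)
        _ = K ^ 9 * (#S : ℝ) * (#S : ℝ) := by ring
    refine cancel_right hn0 ?_
    calc (#(cj u S * (cj v S)⁻¹ * cj w S) : ℝ) * (#S : ℝ)
        = ((#(cj u S * (cj v S)⁻¹ * cj w S) * #(cj v S) : ℕ) : ℝ) := by
          rw [← hB]; push_cast; ring
      _ ≤ ((#(cj u S * cj v S) * #((cj w S)⁻¹ * cj v S * cj v S) : ℕ) : ℝ) := by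
          exact_mod_cast hr
      _ ≤ (K * (#S : ℝ)) * (K ^ 9 * (#S : ℝ)) := by
          push_cast
          exact mul_le_mul (pp u v) hwvv (by positivity) (by positivity)
      _ = K ^ 10 * (#S : ℝ) * (#S : ℝ) := by ring
  -- helpers for sign reductions
  have Cbound : ∀ (u : G) (W : Finset G) (b : ℕ), (#(S * W) : ℝ) ≤ K ^ b * (#S : ℝ) →
      (#((cj u S)⁻¹ * W) : ℝ) ≤ K ^ (b + 1) * (#S : ℝ) := by
    intro u W b hW
    refine cancel_right hn0 ?_
    calc (#((cj u S)⁻¹ * W) : ℝ) * (#S : ℝ)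
        = ((#S * #((cj u S)⁻¹ * W) : ℕ) : ℝ) := by push_cast; ring
      _ ≤ ((#(S * cj u S) * #(S * W) : ℕ) : ℝ) := by
          exact_mod_cast ruzsa_triangle_inequality_invMul_mul_mul (cj u S) S W
      _ ≤ (K * (#S : ℝ)) * (K ^ b * (#S : ℝ)) := by
          push_cast
          exact mul_le_mul (pp2 u) hW (by positivity) (by positivity)
      _ = K ^ (b + 1) * (#S : ℝ) * (#S : ℝ) := by ring
  have Dbound : ∀ (w : G) (W : Finset G) (b : ℕ), (#(W * S) : ℝ) ≤ K ^ b * (#S : ℝ) →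
      (#(W * (cj w S)⁻¹) : ℝ) ≤ K ^ (b + 1) * (#S : ℝ) := by
    intro w W b hW
    refine cancel_right hn0 ?_
    calc (#(W * (cj w S)⁻¹) : ℝ) * (#S : ℝ)
        = ((#(W * (cj w S)⁻¹) * #S : ℕ) : ℝ) := by push_cast; ring
      _ ≤ ((#(W * S) * #(cj w S * S) : ℕ) : ℝ) := by
          exact_mod_cast ruzsa_triangle_inequality_mulInv_mul_mul W S (cj w S)
      _ ≤ (K ^ b * (#S : ℝ)) * (K * (#S : ℝ)) := by
          push_cast
          exact mul_le_mul hW (pp1 w) (by positivity) (by positivity)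
      _ = K ^ (b + 1) * (#S : ℝ) * (#S : ℝ) := by ring
  -- triples with positive first factor
  have B1 : ∀ a b c : G, (#(cj a S * cj b S * cj c S) : ℝ) ≤ K ^ 8 * (#S : ℝ) := M3
  have B2 : ∀ a b c : G, (#(cj a S * cj b S * (cj c S)⁻¹) : ℝ) ≤ K ^ 9 * (#S : ℝ) := by
    intro a b c
    refine Dbound c (cj a S * cj b S) 8 ?_
    have := M3 a b 1
    rwa [cj_one] at this
  have B3 : ∀ a b c : G, (#(cj a S * (cj b S)⁻¹ * cj c S) : ℝ) ≤ K ^ 10 * (#S : ℝ) := R3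
  have B4 : ∀ a b c : G, (#(cj a S * (cj b S)⁻¹ * (cj c S)⁻¹) : ℝ) ≤ K ^ 11 * (#S : ℝ) := by
    intro a b c
    refine Dbound c (cj a S * (cj b S)⁻¹) 10 ?_
    have := R3 a b 1
    rwa [cj_one] at this
  -- conclusion helper
  have concl : ∀ (X : Finset G) (b : ℕ), b ≤ 14 → (#X : ℝ) ≤ K ^ b * (#S : ℝ) →
      (#X : ℝ) ≤ K ^ 14 * (#S : ℝ) := by
    intro X b hb hX
    refine hX.trans (mul_le_mul_of_nonneg_right ?_ hn0.le)
    exact pow_le_pow_right₀ hK hb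
  obtain ⟨g₁, h₁⟩ := h₁
  obtain ⟨g₂, h₂⟩ := h₂
  obtain ⟨g₃, h₃⟩ := h₃
  rcases h₁ with h₁ | h₁ <;> rcases h₂ with h₂ | h₂ <;> rcases h₃ with h₃ | h₃ <;>
    subst h₁ <;> subst h₂ <;> subst h₃
  · exact concl _ 8 (by norm_num) (B1 g₁ g₂ g₃)
  · exact concl _ 9 (by norm_num) (B2 g₁ g₂ g₃)
  · exact concl _ 10 (by norm_num) (B3 g₁ g₂ g₃)
  · exact concl _ 11 (by norm_num) (B4 g₁ g₂ g₃)
  · refine concl _ 9 (by norm_num) ?_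
    rw [mul_assoc]
    refine Cbound g₁ (cj g₂ S * cj g₃ S) 8 ?_
    rw [← mul_assoc]
    have := B1 1 g₂ g₃
    rwa [cj_one] at this
  · refine concl _ 10 (by norm_num) ?_
    rw [mul_assoc]
    refine Cbound g₁ (cj g₂ S * (cj g₃ S)⁻¹) 9 ?_
    rw [← mul_assoc]
    have := B2 1 g₂ g₃
    rwa [cj_one] at this
  · refine concl _ 11 (by norm_num) ?_
    rw [mul_assoc]
    refine Cbound g₁ ((cj g₂ S)⁻¹ * cj g₃ S) 10 ?_
    rw [← mul_assoc]
    have := B3 1 g₂ g₃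
    rwa [cj_one] at this
  · refine concl _ 12 (by norm_num) ?_
    rw [mul_assoc]
    refine Cbound g₁ ((cj g₂ S)⁻¹ * (cj g₃ S)⁻¹) 11 ?_
    rw [← mul_assoc]
    have := B4 1 g₂ g₃
    rwa [cj_one] at this

end ThreeConjAux

/-- Products of three conjugates of `S` or `S⁻¹` are small. -/
theorem three_conjugates_bound {G : Type*} [Group G] [DecidableEq G]
    (S : Finset G) (hS : S.Nonempty) (K : ℝ) (hK : 1 ≤ K)
    (h : ∀ g : G, ((S * S.image (fun s => g⁻¹ * s * g)).card : ℝ) ≤ K * S.card)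
    (S₁ S₂ S₃ : Finset G)
    (h₁ : ∃ g : G, S₁ = S.image (fun s => g⁻¹ * s * g) ∨ S₁ = S⁻¹.image (fun s => g⁻¹ * s * g))
    (h₂ : ∃ g : G, S₂ = S.image (fun s => g⁻¹ * s * g) ∨ S₂ = S⁻¹.image (fun s => g⁻¹ * s * g))
    (h₃ : ∃ g : G, S₃ = S.image (fun s => g⁻¹ * s * g) ∨ S₃ = S⁻¹.image (fun s => g⁻¹ * s * g)) :
    ((S₁ * S₂ * S₃).card : ℝ) ≤ K ^ 14 * S.card := by
  have conv : ∀ X : Finset G,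
      (∃ g : G, X = S.image (fun s => g⁻¹ * s * g) ∨ X = S⁻¹.image (fun s => g⁻¹ * s * g)) →
      (∃ g : G, X = ThreeConjAux.cj g S ∨ X = (ThreeConjAux.cj g S)⁻¹) := by
    rintro X ⟨g, hg | hg⟩
    · exact ⟨g, Or.inl hg⟩
    · exact ⟨g, Or.inr (hg.trans (ThreeConjAux.cj_inv g S))⟩
  exact ThreeConjAux.main_core S K hS hK h S₁ S₂ S₃ (conv S₁ h₁) (conv S₂ h₂) (conv S₃ h₃)
end

section
/- Skew doubling lemma: Let S be a finite nonempty subset of a group G and K ≥ 1 a real such that |S * g⁻¹Sg| ≤ K|S| for every g ∈ G. Then for every positive integer m and every choice of sets S₁, …, S_m, each of which is a conjugate of S or of S⁻¹, one has |S₁*S₂*…*S_m| ≤ K^(14(m−1)) |S|. -/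
open Finset Pointwise

namespace SkewDoublingAux

variable {G : Type*} [Group G] [DecidableEq G]

/-- Conjugation of a finset: `cj g A = g⁻¹ A g`. -/
def cj (g : G) (A : Finset G) : Finset G := A.image fun a => g⁻¹ * a * g

lemma cj_eq_image (g : G) (A : Finset G) :
    cj g A = A.image (MulAut.conj g⁻¹) := by
  unfold cj
  apply image_congr
  intro a _
  simp [MulAut.conj]

lemma card_cj (g : G) (A : Finset G) : #(cj g A) = #A :=
  card_image_of_injective _ fun a b hab => mul_left_cancel (mul_right_cancel hab)

lemma cj_mul (g : G) (A B : Finset G) : cj g (A * B) = cj g A * cj g B := by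
  simp only [cj_eq_image]
  exact Finset.image_mul (MulAut.conj g⁻¹ : G ≃* G)

lemma cj_inv (g : G) (A : Finset G) : cj g A⁻¹ = (cj g A)⁻¹ := by
  ext x
  simp only [cj, mem_image, mem_inv]
  constructor
  · rintro ⟨a, ⟨b, hb, rfl⟩, rfl⟩
    exact ⟨g⁻¹ * b * g, ⟨b, hb, rfl⟩, by group⟩
  · rintro ⟨a, ⟨b, hb, rfl⟩, rfl⟩
    exact ⟨b⁻¹, ⟨b, hb, rfl⟩, by group⟩

lemma cj_cj (g h : G) (A : Finset G) : cj h (cj g A) = cj (g * h) A := by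
  unfold cj
  rw [image_image]
  apply image_congr
  intro a _
  simp only [Function.comp_apply]
  group

lemma cj_one (A : Finset G) : cj 1 A = A := by simp [cj]

lemma cj_subset (g : G) {A B : Finset G} (hAB : A ⊆ B) : cj g A ⊆ cj g B :=
  image_subset_image hAB

/-- `{y} * A = (y A y⁻¹) * {y}`. -/
lemma singleton_mul_eq_cj (y : G) (A : Finset G) : {y} * A = cj y⁻¹ A * {y} := by
  ext x
  simp only [cj, mem_mul, mem_singleton, mem_image, inv_inv]
  constructor
  · rintro ⟨u, hu, v, hv, rfl⟩
    subst hu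
    exact ⟨u * v * u⁻¹, ⟨v, hv, rfl⟩, u, rfl, by group⟩
  · rintro ⟨u, ⟨v, hv, rfl⟩, w, hw, rfl⟩
    subst hw
    exact ⟨w, rfl, v, hv, by group⟩

/-- division helper for Ruzsa-type inequalities -/
lemma ruzsa_div {s u w₁ w₂ c₁ c₂ : ℝ} (hs : 0 < s) (hc₁ : 0 ≤ c₁)
    (h : s * u ≤ w₁ * w₂) (h₁ : w₁ ≤ c₁ * s) (h₂ : w₂ ≤ c₂ * s) (hw₂ : 0 ≤ w₂) :
    u ≤ c₁ * c₂ * s := by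
  nlinarith [mul_le_mul_of_nonneg_right h₁ hw₂,
    mul_le_mul_of_nonneg_left h₂ (mul_nonneg hc₁ hs.le)]

lemma ruzsa_step {S : Finset G} (hS : S.Nonempty) {U W₁ W₂ : Finset G} {c₁ c₂ : ℝ}
    (hc₁ : 0 ≤ c₁) (hR : #S * #U ≤ #W₁ * #W₂)
    (h₁ : (#W₁ : ℝ) ≤ c₁ * #S) (h₂ : (#W₂ : ℝ) ≤ c₂ * #S) :
    (#U : ℝ) ≤ c₁ * c₂ * #S := by
  have hs : (0:ℝ) < #S := by exact_mod_cast hS.card_pos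
  exact ruzsa_div hs hc₁ (by exact_mod_cast hR) h₁ h₂ (by positivity)

/-- Noncommutative Petridis inequality (left version). -/
lemma petridis (X B : Finset G)
    (hmin : ∀ X' ⊆ X, #(X * B) * #X' ≤ #(X' * B) * #X) (C : Finset G) :
    #(C * X * B) * #X ≤ #(X * B) * #(C * X) := by
  induction C using Finset.induction_on with
  | empty => simp
  | @insert x C hx ih =>
    set X' := X ∩ (x⁻¹ • (C * X)) with hX'def
    have hX'X : X' ⊆ X := inter_subset_left
    have h0 : x • X' = (x • X) ∩ (C * X) := by
      rw [hX'def, smul_finset_inter, smul_inv_smul]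
    have hins : insert x C * X = (C * X) ∪ x • X := by
      rw [insert_eq, union_mul, singleton_mul, union_comm]
    have hinsB : insert x C * X * B = (C * X * B) ∪ x • (X * B) := by
      rw [hins, union_mul, smul_mul_assoc]
    have hsub : x • (X' * B) ⊆ C * X * B := by
      have h1 : x • X' ⊆ C * X := by rw [h0]; exact inter_subset_right
      calc x • (X' * B) = (x • X') * B := (smul_mul_assoc _ _ _).symm
        _ ⊆ C * X * B := mul_subset_mul_right h1
    have hsub2 : x • (X' * B) ⊆ x • (X * B) :=
      smul_finset_subset_smul_finset (mul_subset_mul_right hX'X)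
    have key1 : #(insert x C * X * B) + #(X' * B) ≤ #(C * X * B) + #(X * B) := by
      have h1 : #(X' * B) ≤ #((C * X * B) ∩ (x • (X * B))) := by
        rw [← card_smul_finset x (X' * B)]
        exact card_le_card (subset_inter hsub hsub2)
      have h2 := card_union_add_card_inter (C * X * B) (x • (X * B))
      have h3 : #(insert x C * X * B) = #((C * X * B) ∪ x • (X * B)) := by rw [hinsB]
      have h4 : #(x • (X * B)) = #(X * B) := card_smul_finset _ _
      omega
    have key2 : #(insert x C * X) + #X' = #(C * X) + #X := by
      have h2 := card_union_add_card_inter (C * X) (x • X)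
      have h5 : (C * X) ∩ (x • X) = x • X' := by rw [h0, inter_comm]
      have h4 : #(x • X) = #X := card_smul_finset _ _
      have h6 : #(x • X') = #X' := card_smul_finset _ _
      rw [hins]
      rw [h5, h6] at h2
      omega
    have hmin' := hmin X' hX'X
    have main : #(insert x C * X * B) * #X + #(X * B) * #X'
        ≤ #(X * B) * #(insert x C * X) + #(X * B) * #X' := by
      calc #(insert x C * X * B) * #X + #(X * B) * #X'
          ≤ #(insert x C * X * B) * #X + #(X' * B) * #X := by
            exact Nat.add_le_add_left hmin' _
        _ = (#(insert x C * X * B) + #(X' * B)) * #X := by ring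
        _ ≤ (#(C * X * B) + #(X * B)) * #X := by
            exact Nat.mul_le_mul_right _ key1
        _ = #(C * X * B) * #X + #(X * B) * #X := by ring
        _ ≤ #(X * B) * #(C * X) + #(X * B) * #X := Nat.add_le_add_right ih _
        _ = #(X * B) * (#(C * X) + #X) := by ring
        _ = #(X * B) * (#(insert x C * X) + #X') := by rw [key2]
        _ = #(X * B) * #(insert x C * X) + #(X * B) * #X' := by ring
    exact Nat.le_of_add_le_add_right main

/-- existence of a Petridis minimizer -/
lemma exists_min (S : Finset G) (hS : S.Nonempty) :
    ∃ X ⊆ S, X.Nonempty ∧ ∀ X' ⊆ S, #(X * S) * #X' ≤ #(X' * S) * #X := by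
  obtain ⟨X, hXmem, hmin⟩ := Finset.exists_min_image (S.powerset.filter Finset.Nonempty)
      (fun Y => (#(Y * S) : ℚ) / #Y) ⟨S, by simp [hS]⟩
  simp only [mem_filter, mem_powerset] at hXmem
  refine ⟨X, hXmem.1, hXmem.2, ?_⟩
  intro X' hX'
  rcases X'.eq_empty_or_nonempty with rfl | hne
  · simp
  have hmin' := hmin X' (by simp only [mem_filter, mem_powerset]; exact ⟨hX', hne⟩)
  have h1 : (0:ℚ) < #X := by exact_mod_cast hXmem.2.card_pos
  have h2 : (0:ℚ) < #X' := by exact_mod_cast hne.card_pos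
  rw [div_le_div_iff₀ h1 h2] at hmin'
  exact_mod_cast hmin'



variable {S : Finset G} {K : ℝ}

lemma pp (hH : ∀ g : G, (#(S * cj g S) : ℝ) ≤ K * #S) (a b : G) :
    (#(cj a S * cj b S) : ℝ) ≤ K * #S := by
  have e : cj a S * cj b S = cj a (S * cj (b * a⁻¹) S) := by
    rw [cj_mul, cj_cj, inv_mul_cancel_right]
  rw [e, card_cj]
  exact hH _

lemma hH1 (hH : ∀ g : G, (#(S * cj g S) : ℝ) ≤ K * #S) : (#(S * S) : ℝ) ≤ K * #S := by
  have := hH 1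
  rwa [cj_one] at this

lemma np (hS : S.Nonempty) (hK : 1 ≤ K) (hH : ∀ g : G, (#(S * cj g S) : ℝ) ≤ K * #S)
    (a b : G) : (#((cj a S)⁻¹ * cj b S) : ℝ) ≤ K ^ 2 * #S := by
  have hK0 : (0:ℝ) ≤ K := zero_le_one.trans hK
  have hR := Finset.ruzsa_triangle_inequality_invMul_mul_mul (cj a S) S (cj b S)
  have := ruzsa_step hS hK0 hR (hH a) (hH b)
  calc (#((cj a S)⁻¹ * cj b S) : ℝ) ≤ K * K * #S := this
    _ = K ^ 2 * #S := by ring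

lemma pn (hS : S.Nonempty) (hK : 1 ≤ K) (hH : ∀ g : G, (#(S * cj g S) : ℝ) ≤ K * #S)
    (a b : G) : (#(cj a S * (cj b S)⁻¹) : ℝ) ≤ K ^ 2 * #S := by
  have hK0 : (0:ℝ) ≤ K := zero_le_one.trans hK
  have hR := Finset.ruzsa_triangle_inequality_mulInv_mul_mul (cj a S) S (cj b S)
  rw [Nat.mul_comm] at hR
  have h1 : (#(cj a S * S) : ℝ) ≤ K * #S := by have := pp hH a 1; rwa [cj_one] at this
  have h2 : (#(cj b S * S) : ℝ) ≤ K * #S := by have := pp hH b 1; rwa [cj_one] at this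
  have := ruzsa_step hS hK0 hR h1 h2
  calc (#(cj a S * (cj b S)⁻¹) : ℝ) ≤ K * K * #S := this
    _ = K ^ 2 * #S := by ring

lemma nn (hH : ∀ g : G, (#(S * cj g S) : ℝ) ≤ K * #S) (a b : G) :
    (#((cj a S)⁻¹ * (cj b S)⁻¹) : ℝ) ≤ K * #S := by
  rw [← mul_inv_rev, card_inv]
  exact pp hH b a

/-- `A` is a conjugate of `S` or of `S⁻¹`. -/
def IsC (S A : Finset G) : Prop := ∃ g : G, A = cj g S ∨ A = (cj g S)⁻¹

lemma isC_cjS (g : G) : IsC S (cj g S) := ⟨g, Or.inl rfl⟩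

lemma isC_S : IsC S S := ⟨1, Or.inl (cj_one S).symm⟩

lemma IsC.inv {A : Finset G} (h : IsC S A) : IsC S A⁻¹ := by
  obtain ⟨g, rfl | rfl⟩ := h
  · exact ⟨g, Or.inr rfl⟩
  · exact ⟨g, Or.inl (inv_inv _)⟩

lemma IsC.card_eq {A : Finset G} (h : IsC S A) : #A = #S := by
  obtain ⟨g, rfl | rfl⟩ := h
  · exact card_cj g S
  · rw [card_inv, card_cj]

lemma pair (hS : S.Nonempty) (hK : 1 ≤ K) (hH : ∀ g : G, (#(S * cj g S) : ℝ) ≤ K * #S)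
    {A B : Finset G} (hA : IsC S A) (hB : IsC S B) : (#(A * B) : ℝ) ≤ K ^ 2 * #S := by
  have hS0 : (0:ℝ) ≤ #S := Nat.cast_nonneg _
  have hmono : K * #S ≤ K ^ 2 * #S := by
    have h1 : K ≤ K ^ 2 := by nlinarith [mul_nonneg (zero_le_one.trans hK) (sub_nonneg.2 hK)]
    exact mul_le_mul_of_nonneg_right h1 hS0
  obtain ⟨a, rfl | rfl⟩ := hA <;> obtain ⟨b, rfl | rfl⟩ := hB
  · exact (pp hH a b).trans hmono
  · exact pn hS hK hH a b
  · exact np hS hK hH a b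
  · exact (nn hH a b).trans hmono

lemma triple (hS : S.Nonempty) (hK : 1 ≤ K)
    (hH : ∀ g : G, (#(S * cj g S) : ℝ) ≤ K * #S) :
    ∀ A B C : Finset G, IsC S A → IsC S B → IsC S C →
      (#(A * (B * C)) : ℝ) ≤ K ^ 14 * #S := by
  have hK0 : (0:ℝ) ≤ K := zero_le_one.trans hK
  have hS0 : (0:ℝ) < #S := by exact_mod_cast hS.card_pos
  -- Petridis minimizer
  obtain ⟨X, hXS, hXne, hmin⟩ := exists_min S hS
  have hX0 : (0:ℝ) < #X := by exact_mod_cast hXne.card_pos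
  have hXSK : (#(X * S) : ℝ) ≤ K * #X := by
    have h1 := hmin S (subset_refl S)
    have h2 : (#(X * S) : ℝ) * #S ≤ (K * #X) * #S := by
      calc (#(X * S) : ℝ) * #S ≤ (#(S * S) : ℝ) * #X := by exact_mod_cast h1
        _ ≤ (K * #S) * #X := mul_le_mul_of_nonneg_right (hH1 hH) hX0.le
        _ = (K * #X) * #S := by ring
    exact le_of_mul_le_mul_right h2 hS0
  have hpet : ∀ C : Finset G, #(C * X * S) * #X ≤ #(X * S) * #(C * X) :=
    petridis X S fun X' hX' => hmin X' (hX'.trans hXS)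
  -- conjugated Petridis consequence
  have petR : ∀ (C : Finset G) (g : G),
      (#(C * cj g X * cj g S) : ℝ) ≤ K * #(C * cj g X) := by
    intro C g
    have e : C * cj g X * cj g S = cj g (cj g⁻¹ C * X * S) := by
      rw [cj_mul, cj_mul, cj_cj, inv_mul_cancel, cj_one]
    have e2 : C * cj g X = cj g (cj g⁻¹ C * X) := by
      rw [cj_mul, cj_cj, inv_mul_cancel, cj_one]
    rw [e, e2, card_cj, card_cj]
    have h1 := hpet (cj g⁻¹ C)
    have h2 : (#(cj g⁻¹ C * X * S) : ℝ) * #X ≤ (K * #(cj g⁻¹ C * X)) * #X := by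
      calc (#(cj g⁻¹ C * X * S) : ℝ) * #X ≤ (#(X * S) : ℝ) * #(cj g⁻¹ C * X) := by
            exact_mod_cast h1
        _ ≤ (K * #X) * #(cj g⁻¹ C * X) := mul_le_mul_of_nonneg_right hXSK (by positivity)
        _ = (K * #(cj g⁻¹ C * X)) * #X := by ring
    exact le_of_mul_le_mul_right h2 hX0
  -- L5
  have L5 : ∀ g : G, (#(S * (cj g X * cj g S)) : ℝ) ≤ K ^ 2 * #S := by
    intro g
    have e : S * (cj g X * cj g S) = S * cj g X * cj g S := (mul_assoc _ _ _).symm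
    rw [e]
    calc (#(S * cj g X * cj g S) : ℝ) ≤ K * #(S * cj g X) := petR S g
      _ ≤ K * #(S * cj g S) := by
          have hsub : S * cj g X ⊆ S * cj g S := mul_subset_mul_left (cj_subset g hXS)
          have h := card_le_card hsub
          exact mul_le_mul_of_nonneg_left (by exact_mod_cast h) hK0
      _ ≤ K * (K * #S) := mul_le_mul_of_nonneg_left (hH g) hK0
      _ = K ^ 2 * #S := by ring
  -- L6
  have L6 : ∀ g : G, (#(S * (cj g X * S⁻¹)) : ℝ) ≤ K ^ 3 * #S := by
    intro g
    have hR : #S * #(S * (cj g X * S⁻¹)) ≤ #(S * (cj g X * cj g S)) * #(S * cj g S) := by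
      have := Finset.ruzsa_triangle_inequality_mulInv_mul_mul (S * cj g X) (cj g S) S
      rw [card_cj] at this
      rw [Nat.mul_comm] at this
      simpa only [mul_assoc] using this
    have := ruzsa_step hS (by positivity) hR (L5 g) (hH g)
    calc (#(S * (cj g X * S⁻¹)) : ℝ) ≤ K ^ 2 * K * #S := this
      _ = K ^ 3 * #S := by ring
  -- L7
  have L7 : ∀ g : G, (#(S * ((cj g X)⁻¹ * (cj g X * cj g S))) : ℝ) ≤ K ^ 5 * #S := by
    intro g
    have hR : #S * #(S * ((cj g X)⁻¹ * (cj g X * cj g S)))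
        ≤ #(S * (cj g X * S⁻¹)) * #(S * (cj g X * cj g S)) := by
      have := Finset.ruzsa_triangle_inequality_mul_mulInv_mul
        (S * (cj g X)⁻¹) S (cj g X * cj g S)
      simpa only [mul_inv_rev, inv_inv, mul_assoc] using this
    have := ruzsa_step hS (pow_nonneg hK0 3) hR (L6 g) (L5 g)
    calc (#(S * ((cj g X)⁻¹ * (cj g X * cj g S))) : ℝ) ≤ K ^ 3 * K ^ 2 * #S := this
      _ = K ^ 5 * #S := by ring
  -- L8
  have L8 : ∀ g l : G, (#(S * ((cj g X)⁻¹ * (cj g X * cj l S))) : ℝ) ≤ K ^ 7 * #S := by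
    intro g l
    have hR : #S * #(S * ((cj g X)⁻¹ * (cj g X * cj l S)))
        ≤ #(S * ((cj g X)⁻¹ * (cj g X * cj g S))) * #((cj l S)⁻¹ * cj g S) := by
      have := Finset.ruzsa_triangle_inequality_mul_mul_invMul
        (S * ((cj g X)⁻¹ * cj g X)) (cj g S) (cj l S)
      rw [card_cj] at this
      rw [Nat.mul_comm] at this
      simpa only [mul_assoc] using this
    have := ruzsa_step hS (pow_nonneg hK0 5) hR (L7 g) (np hS hK hH l g)
    calc (#(S * ((cj g X)⁻¹ * (cj g X * cj l S))) : ℝ) ≤ K ^ 5 * K ^ 2 * #S := this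
      _ = K ^ 7 * #S := by ring
  -- covering
  obtain ⟨F₀, hF₀S, hF₀K, hcov₀⟩ : ∃ F₀ ⊆ S⁻¹, (#F₀ : ℝ) ≤ K ∧ S⁻¹ ⊆ F₀ * (X⁻¹ / X⁻¹) := by
    refine Finset.ruzsa_covering_mul hXne.inv ?_
    rw [← mul_inv_rev, card_inv, card_inv]
    exact hXSK
  have hFS : F₀⁻¹ ⊆ S := by
    have := inv_subset_inv hF₀S
    rwa [inv_inv] at this
  have hFK : (#(F₀⁻¹) : ℝ) ≤ K := by rw [card_inv]; exact hF₀K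
  have hcov : S ⊆ X⁻¹ * X * F₀⁻¹ := by
    have h1 := inv_subset_inv hcov₀
    simp only [div_eq_mul_inv, mul_inv_rev, inv_inv] at h1
    exact h1
  set F := F₀⁻¹ with hF
  -- L9 : positive triples with first factor S
  have L9 : ∀ g k : G, (#(S * (cj g S * cj k S)) : ℝ) ≤ K ^ 8 * #S := by
    intro g k
    set D := S * ((cj g X)⁻¹ * cj g X) with hD
    have hsub1 : S * (cj g S * cj k S) ⊆ D * (cj g F * cj k S) := by
      have h1 : cj g S ⊆ (cj g X)⁻¹ * (cj g X * cj g F) := by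
        have h2 := cj_subset g hcov
        rwa [cj_mul, cj_mul, cj_inv, mul_assoc] at h2
      calc S * (cj g S * cj k S)
          ⊆ S * (((cj g X)⁻¹ * (cj g X * cj g F)) * cj k S) :=
            mul_subset_mul_left (mul_subset_mul_right h1)
        _ = D * (cj g F * cj k S) := by rw [hD]; simp only [mul_assoc]
    have hsub2 : D * (cj g F * cj k S) ⊆ (cj g F).biUnion fun y => D * (y • cj k S) := by
      intro w hw
      rw [mem_mul] at hw
      obtain ⟨d, hd, v, hv, rfl⟩ := hw
      rw [mem_mul] at hv
      obtain ⟨y, hy, z, hz, rfl⟩ := hv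
      exact mem_biUnion.2 ⟨y, hy, mem_mul.2 ⟨d, hd, y * z, smul_mem_smul_finset hz, rfl⟩⟩
    have each : ∀ y ∈ cj g F, (#(D * (y • cj k S)) : ℝ) ≤ K ^ 7 * #S := by
      intro y _
      have e : D * (y • cj k S) = (D * cj (k * y⁻¹) S) * {y} := by
        rw [← singleton_mul, singleton_mul_eq_cj, cj_cj, ← mul_assoc]
      rw [e, card_mul_singleton]
      have e2 : D * cj (k * y⁻¹) S = S * ((cj g X)⁻¹ * (cj g X * cj (k * y⁻¹) S)) := by
        rw [hD]; simp only [mul_assoc]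
      rw [e2]
      exact L8 g (k * y⁻¹)
    have h2 : #(D * (cj g F * cj k S)) ≤ ∑ y ∈ cj g F, #(D * (y • cj k S)) :=
      le_trans (card_le_card hsub2) card_biUnion_le
    have h3 : (#(S * (cj g S * cj k S)) : ℝ) ≤ ∑ y ∈ cj g F, (#(D * (y • cj k S)) : ℝ) := by
      calc (#(S * (cj g S * cj k S)) : ℝ) ≤ (#(D * (cj g F * cj k S)) : ℝ) := by
            exact_mod_cast card_le_card hsub1
        _ ≤ ∑ y ∈ cj g F, (#(D * (y • cj k S)) : ℝ) := by
            push_cast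
            exact_mod_cast h2
    have h4 : ∑ y ∈ cj g F, (#(D * (y • cj k S)) : ℝ) ≤ #(cj g F) • (K ^ 7 * #S) :=
      Finset.sum_le_card_nsmul _ _ _ each
    rw [nsmul_eq_mul, card_cj] at h4
    calc (#(S * (cj g S * cj k S)) : ℝ) ≤ (#F : ℝ) * (K ^ 7 * #S) := h3.trans h4
      _ ≤ K * (K ^ 7 * #S) := by
          refine mul_le_mul_of_nonneg_right hFK (by positivity)
      _ = K ^ 8 * #S := by ring
  -- L9' : all positive triples
  have L9' : ∀ a b c : G, (#(cj a S * (cj b S * cj c S)) : ℝ) ≤ K ^ 8 * #S := by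
    intro a b c
    have e : cj a S * (cj b S * cj c S)
        = cj a (S * (cj (b * a⁻¹) S * cj (c * a⁻¹) S)) := by
      rw [cj_mul, cj_mul, cj_cj, cj_cj, inv_mul_cancel_right, inv_mul_cancel_right]
    rw [e, card_cj]
    exact L9 _ _
  -- L11 : negative-first triples
  have L11 : ∀ a b c : G, (#((cj a S)⁻¹ * (cj b S * cj c S)) : ℝ) ≤ K ^ 9 * #S := by
    intro a b c
    have hR := Finset.ruzsa_triangle_inequality_invMul_mul_mul (cj a S) S (cj b S * cj c S)
    have h9 : (#(S * (cj b S * cj c S)) : ℝ) ≤ K ^ 8 * #S := by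
      have := L9' 1 b c; rwa [cj_one] at this
    have := ruzsa_step hS hK0 hR (hH a) h9
    calc (#((cj a S)⁻¹ * (cj b S * cj c S)) : ℝ) ≤ K * K ^ 8 * #S := this
      _ = K ^ 9 * #S := by ring
  -- L12 : negative-middle triples
  have L12 : ∀ a b c : G, (#(cj a S * ((cj b S)⁻¹ * cj c S)) : ℝ) ≤ K ^ 10 * #S := by
    intro a b c
    have hR : #S * #(cj a S * ((cj b S)⁻¹ * cj c S))
        ≤ #(cj a S * S) * #((cj c S)⁻¹ * (cj b S * S)) := by
      have := Finset.ruzsa_triangle_inequality_mulInv_mul_mul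
        (cj a S) S ((cj c S)⁻¹ * cj b S)
      rw [Nat.mul_comm] at this
      simpa only [mul_inv_rev, inv_inv, mul_assoc] using this
    have h1 : (#(cj a S * S) : ℝ) ≤ K * #S := by
      have := pp hH a 1; rwa [cj_one] at this
    have h11 : (#((cj c S)⁻¹ * (cj b S * S)) : ℝ) ≤ K ^ 9 * #S := by
      have := L11 c b 1; rwa [cj_one] at this
    have := ruzsa_step hS hK0 hR h1 h11
    calc (#(cj a S * ((cj b S)⁻¹ * cj c S)) : ℝ) ≤ K * K ^ 9 * #S := this
      _ = K ^ 10 * #S := by ring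
  -- the general triple bound
  intro A B C hA hB hC
  obtain ⟨w, hw⟩ := hB
  have hSB : (#(S * (B * cj w S)) : ℝ) ≤ K ^ 10 * #S := by
    rcases hw with rfl | rfl
    · have := L9' 1 w w
      rw [cj_one] at this
      refine this.trans ?_
      have h1 : K ^ 8 ≤ K ^ 10 := pow_le_pow_right₀ hK (by norm_num)
      exact mul_le_mul_of_nonneg_right h1 hS0.le
    · have := L12 1 w w
      rwa [cj_one] at this
  have hstep2 : (#(S * (B * C)) : ℝ) ≤ K ^ 12 * #S := by
    have hR : #S * #(S * (B * C)) ≤ #(S * (B * cj w S)) * #(C⁻¹ * cj w S) := by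
      have := Finset.ruzsa_triangle_inequality_mul_mul_invMul (S * B) (cj w S) C
      rw [card_cj] at this
      rw [Nat.mul_comm] at this
      simpa only [mul_assoc] using this
    have hpairC : (#(C⁻¹ * cj w S) : ℝ) ≤ K ^ 2 * #S := pair hS hK hH hC.inv (isC_cjS w)
    have := ruzsa_step hS (pow_nonneg hK0 10) hR hSB hpairC
    calc (#(S * (B * C)) : ℝ) ≤ K ^ 10 * K ^ 2 * #S := this
      _ = K ^ 12 * #S := by ring
  have hR2 := Finset.ruzsa_triangle_inequality_mul_mulInv_mul A S (B * C)
  have hpairA : (#(S * A⁻¹) : ℝ) ≤ K ^ 2 * #S := pair hS hK hH isC_S hA.inv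
  have := ruzsa_step hS (pow_nonneg hK0 2) hR2 hpairA hstep2
  calc (#(A * (B * C)) : ℝ) ≤ K ^ 2 * K ^ 12 * #S := this
    _ = K ^ 14 * #S := by ring

lemma list_bound (hS : S.Nonempty) (hK : 1 ≤ K)
    (hH : ∀ g : G, (#(S * cj g S) : ℝ) ≤ K * #S) :
    ∀ (n : ℕ) (L : List (Finset G)), L.length = n → L ≠ [] → (∀ T ∈ L, IsC S T) →
      (#L.prod : ℝ) ≤ K ^ (14 * (n - 1)) * #S := by
  have hK0 : (0:ℝ) ≤ K := zero_le_one.trans hK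
  have htriple := triple hS hK hH
  intro n
  induction n using Nat.strong_induction_on with
  | _ n ih =>
    intro L hlen hne hmem
    match L, hlen, hne, hmem with
    | [], _, hne, _ => exact absurd rfl hne
    | [T], hlen, _, hmem =>
      have hc : #T = #S := (hmem T (by simp)).card_eq
      simp only [List.prod_cons, List.prod_nil, mul_one]
      rw [hc]
      subst hlen
      simp
    | [T, U], hlen, _, hmem =>
      have hTU := pair hS hK hH (hmem T (by simp)) (hmem U (by simp))
      simp only [List.prod_cons, List.prod_nil, mul_one]
      subst hlen
      refine hTU.trans ?_
      have hpow : K ^ 2 ≤ K ^ (14 * ([T, U].length - 1)) :=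
        pow_le_pow_right₀ hK (by norm_num)
      exact mul_le_mul_of_nonneg_right hpow (Nat.cast_nonneg _)
    | T :: U :: V :: M, hlen, _, hmem =>
      have hn : n = M.length + 3 := by
        simp only [List.length_cons] at hlen
        omega
      have hR := Finset.ruzsa_triangle_inequality_invMul_mul_mul
        (U⁻¹ * T⁻¹) S ((V :: M).prod)
      have hR' : #S * #(T * (U * (V :: M).prod))
          ≤ #(S * (U⁻¹ * T⁻¹)) * #(S * (V :: M).prod) := by
        simpa only [mul_inv_rev, inv_inv, mul_assoc] using hR
      have h1 : (#(S * (U⁻¹ * T⁻¹)) : ℝ) ≤ K ^ 14 * #S :=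
        htriple S U⁻¹ T⁻¹ isC_S ((hmem U (by simp)).inv) ((hmem T (by simp)).inv)
      have h2 : (#((S :: V :: M).prod) : ℝ) ≤ K ^ (14 * ((n - 1) - 1)) * #S := by
        refine ih (n - 1) (by omega) (S :: V :: M) (by simp [hn]) (by simp) ?_
        intro T' hT'
        simp only [List.mem_cons] at hT'
        rcases hT' with rfl | hT'
        · exact isC_S
        · exact hmem T' (by simp [hT'])
      have h2' : (#(S * (V :: M).prod) : ℝ) ≤ K ^ (14 * ((n - 1) - 1)) * #S := by
        simpa only [List.prod_cons] using h2
      have hmain := ruzsa_step hS (pow_nonneg hK0 14) hR' h1 h2'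
      have hgoal : (#((T :: U :: V :: M).prod) : ℝ)
          ≤ K ^ 14 * K ^ (14 * ((n - 1) - 1)) * #S := by
        simpa only [List.prod_cons] using hmain
      refine hgoal.trans ?_
      have hexp : K ^ 14 * K ^ (14 * ((n - 1) - 1)) = K ^ (14 * (n - 1)) := by
        rw [← pow_add]
        congr 1
        omega
      rw [hexp]

end SkewDoublingAux

open SkewDoublingAux

/-- The Skew doubling lemma. -/
theorem skew_doubling {G : Type*} [Group G] [DecidableEq G]
    (S : Finset G) (hS : S.Nonempty) (K : ℝ) (hK : 1 ≤ K)
    (h : ∀ g : G, ((S * S.image (fun s => g⁻¹ * s * g)).card : ℝ) ≤ K * S.card)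
    (m : ℕ) (hm : 0 < m) (Si : Fin m → Finset G)
    (hSi : ∀ i : Fin m, ∃ g : G,
      Si i = S.image (fun s => g⁻¹ * s * g) ∨ Si i = S⁻¹.image (fun s => g⁻¹ * s * g)) :
    (((List.ofFn Si).prod).card : ℝ) ≤ K ^ (14 * (m - 1)) * S.card := by
  have hIs : ∀ T ∈ List.ofFn Si, IsC S T := by
    intro T hT
    rw [List.mem_ofFn] at hT
    obtain ⟨i, rfl⟩ := hT
    obtain ⟨g, hg | hg⟩ := hSi i
    · exact ⟨g, Or.inl hg⟩
    · exact ⟨g, Or.inr (hg.trans (cj_inv g S))⟩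
  have hne : List.ofFn Si ≠ [] := by
    intro h0
    have : m = 0 := by simpa [h0] using (List.length_ofFn (f := Si)).symm
    omega
  exact list_bound hS hK h m (List.ofFn Si) (List.length_ofFn (f := Si)) hne hIs
end

section
/- Let G be a finite simple group in which every nontrivial element g admits an element h with ⟨g, h⟩ = G (3/2-generation). Then for every subset S of G with |S| ≥ 2 there exists x ∈ G such that the translate S·x generates G. -/
open Finset Pointwise

/-- In a 3/2-generated finite simple group, every subset of size at least two
has a translate that generates. -/
theorem translate_generates {G : Type*} [Group G] [Fintype G] [DecidableEq G]
    [IsSimpleGroup G]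
    (h32 : ∀ g : G, g ≠ 1 → ∃ h : G, Subgroup.closure ({g, h} : Set G) = ⊤)
    (S : Finset G) (hS : 2 ≤ S.card) :
    ∃ x : G, Subgroup.closure ((S.image (fun s => s * x) : Finset G) : Set G) = ⊤ := by
  obtain ⟨a, ha, b, hb, hab⟩ := Finset.one_lt_card.mp hS
  have hg : a * b⁻¹ ≠ 1 := fun h => hab (mul_inv_eq_one.mp h)
  obtain ⟨h, hh⟩ := h32 (a * b⁻¹) hg
  refine ⟨a⁻¹ * h, ?_⟩
  have hmem_h : h ∈ Subgroup.closure ((S.image (fun s => s * (a⁻¹ * h)) : Finset G) : Set G) := by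
    apply Subgroup.subset_closure
    simp only [Finset.coe_image, Set.mem_image, Finset.mem_coe]
    exact ⟨a, ha, by group⟩
  have hmem_b : b * (a⁻¹ * h) ∈
      Subgroup.closure ((S.image (fun s => s * (a⁻¹ * h)) : Finset G) : Set G) := by
    apply Subgroup.subset_closure
    simp only [Finset.coe_image, Set.mem_image, Finset.mem_coe]
    exact ⟨b, hb, rfl⟩
  have hmem_g : a * b⁻¹ ∈
      Subgroup.closure ((S.image (fun s => s * (a⁻¹ * h)) : Finset G) : Set G) := by
    have := mul_mem hmem_h (inv_mem hmem_b)
    have heq : h * (b * (a⁻¹ * h))⁻¹ = (b * a⁻¹)⁻¹ := by group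
    rw [heq] at this
    simpa using this
  rw [eq_top_iff, ← hh]
  rw [Subgroup.closure_le]
  intro y hy
  rcases hy with rfl | rfl
  · exact hmem_g
  · exact hmem_h
end

section
/- Let G be a finite group and Z a nonempty subset of G. Let T be a subset of G of minimal cardinality among subsets intersecting every conjugate g⁻¹Zg of Z nontrivially (for all g ∈ G). Then there exists a nontrivial element z ∈ Z such that |T| · |Z| ≥ |z^G|, where z^G is the conjugacy class of z; in particular |T| ≥ minclass(Z,G)/|Z|, where minclass(Z,G) is the minimal size of a nontrivial conjugacy class of G meeting Z. -/
open Finset Pointwise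

private def Cz {G : Type*} [Group G] [Fintype G] [DecidableEq G] (z : G) : Finset G :=
  Finset.univ.filter (fun g => g * z = z * g)

private lemma fiber_card {G : Type*} [Group G] [Fintype G] [DecidableEq G]
    (z t g₀ : G) (h : g₀⁻¹ * z * g₀ = t) :
    (Finset.univ.filter fun g => g⁻¹ * z * g = t).card = (Cz z).card := by
  apply Finset.card_bij' (fun g _ => g * g₀⁻¹) (fun c _ => c * g₀)
  · intro g hg
    have hg' : g⁻¹ * z * g = t := (Finset.mem_filter.mp hg).2
    have e : g⁻¹ * z * g = g₀⁻¹ * z * g₀ := hg'.trans h.symm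
    have e2 := congrArg (fun x => g * x * g₀⁻¹) e
    simp only [Cz, Finset.mem_filter, Finset.mem_univ, true_and]
    simp only [mul_assoc, mul_inv_cancel_left, inv_mul_cancel_left, mul_inv_cancel, mul_one] at e2
    simp only [mul_assoc]
    exact e2.symm
  · intro c hc
    have hc' : c * z = z * c := (Finset.mem_filter.mp hc).2
    simp only [Finset.mem_filter, Finset.mem_univ, true_and]
    have hzc : c⁻¹ * z * c = z := by
      rw [mul_assoc, ← hc', ← mul_assoc, inv_mul_cancel, one_mul]
    rw [← h]
    rw [mul_inv_rev]
    calc g₀⁻¹ * c⁻¹ * z * (c * g₀) = g₀⁻¹ * (c⁻¹ * z * c) * g₀ := by group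
      _ = g₀⁻¹ * z * g₀ := by rw [hzc]
  · intro g _; group
  · intro c _; group

private lemma classB {G : Type*} [Group G] [Fintype G] [DecidableEq G] (z : G) :
    (Finset.univ.image fun h : G => h⁻¹ * z * h).card * (Cz z).card = Fintype.card G := by
  have hmaps : ∀ g ∈ (Finset.univ : Finset G),
      (fun h : G => h⁻¹ * z * h) g ∈ Finset.univ.image fun h : G => h⁻¹ * z * h :=
    fun g hg => Finset.mem_image_of_mem _ hg
  rw [← Finset.card_univ, Finset.card_eq_sum_card_fiberwise hmaps]
  rw [Finset.sum_congr rfl (fun t ht => ?_), Finset.sum_const, smul_eq_mul]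
  obtain ⟨g₀, _, hg₀⟩ := Finset.mem_image.mp ht
  exact fiber_card z t g₀ hg₀

/-- A minimal set meeting every conjugate of `Z` nontrivially is large. -/
theorem minimal_transversal_bound {G : Type*} [Group G] [Fintype G] [DecidableEq G]
    (Z : Finset G) (hZ : ∃ z ∈ Z, z ≠ 1)
    (T : Finset G)
    (hT : ∀ g : G, ∃ t ∈ T, t ≠ 1 ∧ t ∈ Z.image (fun z => g⁻¹ * z * g))
    (hTmin : ∀ T' : Finset G,
      (∀ g : G, ∃ t ∈ T', t ≠ 1 ∧ t ∈ Z.image (fun z => g⁻¹ * z * g)) →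
      T.card ≤ T'.card) :
    ∃ z ∈ Z, z ≠ 1 ∧
      (Finset.univ.image (fun h : G => h⁻¹ * z * h)).card ≤ T.card * Z.card := by
  classical
  set S := Z.filter (fun z => z ≠ 1) with hS
  have hSne : S.Nonempty := by
    obtain ⟨z, hzZ, hz1⟩ := hZ
    exact ⟨z, Finset.mem_filter.mpr ⟨hzZ, hz1⟩⟩
  obtain ⟨z₀, hz₀S, hz₀max⟩ := S.exists_max_image (fun z => (Cz z).card) hSne
  have hz₀Z : z₀ ∈ Z := (Finset.mem_filter.mp hz₀S).1
  have hz₀1 : z₀ ≠ 1 := (Finset.mem_filter.mp hz₀S).2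
  refine ⟨z₀, hz₀Z, hz₀1, ?_⟩
  -- choice of pairs
  have hchoice : ∀ g : G, ∃ p : G × G, p.1 ∈ T ∧ p.2 ∈ S ∧ g⁻¹ * p.2 * g = p.1 := by
    intro g
    obtain ⟨t, htT, htne, htmem⟩ := hT g
    obtain ⟨z, hzZ, hzt⟩ := Finset.mem_image.mp htmem
    refine ⟨(t, z), htT, Finset.mem_filter.mpr ⟨hzZ, ?_⟩, hzt⟩
    rintro rfl
    apply htne
    rw [← hzt]; group
  choose φ hφ using hchoice
  have hmaps : ∀ g ∈ (Finset.univ : Finset G), φ g ∈ T ×ˢ S :=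
    fun g _ => Finset.mem_product.mpr ⟨(hφ g).1, (hφ g).2.1⟩
  have hsum : Fintype.card G = ∑ p ∈ T ×ˢ S, (Finset.univ.filter fun g => φ g = p).card := by
    rw [← Finset.card_univ, Finset.card_eq_sum_card_fiberwise hmaps]
  have hbound : ∀ p ∈ T ×ˢ S, (Finset.univ.filter fun g => φ g = p).card ≤ (Cz z₀).card := by
    intro p hp
    rcases (Finset.univ.filter fun g => φ g = p).eq_empty_or_nonempty with he | ⟨g, hg⟩
    · simp [he]
    · have hgp : φ g = p := (Finset.mem_filter.mp hg).2
      have hp2 : p.2 ∈ S := (Finset.mem_product.mp hp).2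
      have hconj : g⁻¹ * p.2 * g = p.1 := by rw [← hgp]; exact (hφ g).2.2
      calc (Finset.univ.filter fun g => φ g = p).card
          ≤ (Finset.univ.filter fun g => g⁻¹ * p.2 * g = p.1).card := by
            apply Finset.card_le_card
            intro x hx
            have hx' : φ x = p := (Finset.mem_filter.mp hx).2
            refine Finset.mem_filter.mpr ⟨Finset.mem_univ _, ?_⟩
            rw [← hx']; exact (hφ x).2.2
        _ = (Cz p.2).card := fiber_card p.2 p.1 g hconj
        _ ≤ (Cz z₀).card := hz₀max p.2 hp2
  have hG : Fintype.card G ≤ T.card * Z.card * (Cz z₀).card := by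
    calc Fintype.card G = ∑ p ∈ T ×ˢ S, (Finset.univ.filter fun g => φ g = p).card := hsum
      _ ≤ ∑ _p ∈ T ×ˢ S, (Cz z₀).card := Finset.sum_le_sum hbound
      _ = (T ×ˢ S).card * (Cz z₀).card := by rw [Finset.sum_const, smul_eq_mul]
      _ ≤ T.card * Z.card * (Cz z₀).card := by
          apply Nat.mul_le_mul_right
          rw [Finset.card_product]
          exact Nat.mul_le_mul_left _ (Finset.card_filter_le _ _)
  have hCpos : 0 < (Cz z₀).card := by
    apply Finset.card_pos.mpr
    exact ⟨1, Finset.mem_filter.mpr ⟨Finset.mem_univ _, by group⟩⟩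
  have := classB (G := G) z₀
  apply Nat.le_of_mul_le_mul_right _ hCpos
  rw [this]
  exact hG
end

section
/- Let G be a finite group and S a subset of G with |S| ≥ 2. Then there exist a positive integer m and elements g₁, …, g_m ∈ G such that the product set X = S^{g₁} * S^{g₂} * … * S^{g_m} satisfies |X| = |S|^m and |X|² · |S|² ≥ minclass(G), where minclass(G) is the size of the smallest nontrivial conjugacy class of G and S^g := g⁻¹Sg. -/
open Finset Pointwise

/-- Lemma: from any subset of size at least two one can build a large product of
conjugates, of size at least the square root of the smallest class size over `|S|`. -/
theorem get_a_big_set {G : Type*} [Group G] [Fintype G] [DecidableEq G] [Nontrivial G]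
    (S : Finset G) (hS : 2 ≤ S.card) :
    ∃ (m : ℕ) (_ : 0 < m) (g : Fin m → G),
      ((List.ofFn (fun i => S.image (fun s => (g i)⁻¹ * s * (g i)))).prod).card
        = S.card ^ m ∧
      ∃ h : G, h ≠ 1 ∧
        (Finset.univ.image (fun x : G => x⁻¹ * h * x)).card ≤
          ((List.ofFn (fun i => S.image (fun s => (g i)⁻¹ * s * (g i)))).prod).card ^ 2
            * S.card ^ 2 := by
  classical
  set T : G → Finset G := fun g => S.image (fun s => g⁻¹ * s * g) with hTdef
  have hTcard : ∀ g : G, (T g).card = S.card := by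
    intro g
    exact Finset.card_image_of_injective _ (fun a b hab => by
      have := hab; simpa using mul_left_cancel (mul_right_cancel this))
  set P : ℕ → Prop := fun m => ∃ g : Fin m → G,
      ((List.ofFn (fun i => T (g i))).prod).card = S.card ^ m with hPdef
  have hP1 : P 1 := by
    refine ⟨fun _ => 1, ?_⟩
    simp [hTcard 1]
  have hPbound : ∀ m, P m → m ≤ Fintype.card G := by
    intro m ⟨g, hg⟩
    have h1 : S.card ^ m ≤ Fintype.card G := hg ▸ Finset.card_le_univ _
    have h2 : 2 ^ m ≤ S.card ^ m := Nat.pow_le_pow_left hS m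
    have h3 : m < 2 ^ m := Nat.lt_two_pow_self
    omega
  set m := Nat.findGreatest P (Fintype.card G) with hmdef
  have hm1 : 1 ≤ m := Nat.le_findGreatest (hPbound 1 hP1) hP1
  have hPm : P m := Nat.findGreatest_spec (hPbound 1 hP1) hP1
  have hnot : ¬ P (m + 1) := by
    apply Nat.findGreatest_is_greatest (lt_add_one m)
    obtain ⟨g, hg⟩ := hPm
    have h1 : S.card ^ m ≤ Fintype.card G := hg ▸ Finset.card_le_univ _
    have h2 : 2 ^ m ≤ S.card ^ m := Nat.pow_le_pow_left hS m
    have h3 : m < 2 ^ m := Nat.lt_two_pow_self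
    omega
  obtain ⟨g, hX⟩ := hPm
  set X : Finset G := (List.ofFn (fun i => T (g i))).prod with hXdef
  -- key step : no conjugate of S multiplies freely onto X
  have key : ∀ g₀ : G, ∃ x ∈ X, ∃ y ∈ X, ∃ u ∈ S, ∃ v ∈ S, u ≠ v ∧
      y⁻¹ * x = g₀⁻¹ * (v * u⁻¹) * g₀ := by
    intro g₀
    have hne : (X * T g₀).card ≠ X.card * (T g₀).card := by
      intro hcon
      apply hnot
      refine ⟨(Fin.snoc g g₀ : Fin (m+1) → G), ?_⟩
      have hlist : (List.ofFn fun i : Fin (m+1) => T ((Fin.snoc g g₀ : Fin (m+1) → G) i))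
          = (List.ofFn fun i : Fin m => T (g i)) ++ [T g₀] := by
        rw [List.ofFn_succ']
        simp [Fin.snoc_castSucc, Fin.snoc_last, List.concat_eq_append]
      rw [hlist, List.prod_append, List.prod_singleton, ← hXdef, hcon, hX, hTcard,
        pow_succ]
    rw [Ne, Finset.card_mul_iff] at hne
    rw [Set.InjOn] at hne
    push_neg at hne
    obtain ⟨⟨x, a⟩, hpa, ⟨y, b⟩, hqb, hmul, hpq⟩ := hne
    simp only [Finset.coe_product, Set.mem_prod, Finset.mem_coe] at hpa hqb
    obtain ⟨hx, ha⟩ := hpa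
    obtain ⟨hy, hb⟩ := hqb
    simp only [hTdef, Finset.mem_image] at ha hb
    obtain ⟨u, hu, hau⟩ := ha
    obtain ⟨v, hv, hbv⟩ := hb
    refine ⟨x, hx, y, hy, u, hu, v, hv, ?_, ?_⟩
    · intro huv
      apply hpq
      have hab : a = b := by rw [← hau, ← hbv, huv]
      have hxy : x = y := by
        have := hmul
        simp only at this
        rw [hab] at this
        exact mul_right_cancel this
      rw [hxy, hab]
    · simp only at hmul
      rw [← hau, ← hbv] at hmul
      have hx' : x = y * (g₀⁻¹ * v * g₀) * (g₀⁻¹ * u * g₀)⁻¹ := by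
        rw [← hmul]; group
      rw [hx']; group
  choose x hx y hy u hu v hv hvne heq using key
  set f : G → G × G × G := fun g₀ => ((y g₀)⁻¹ * x g₀, u g₀, v g₀) with hfdef
  set t : Finset (G × G × G) := (X⁻¹ * X) ×ˢ S ×ˢ S with htdef
  have hmaps : ∀ g₀ : G, f g₀ ∈ t := by
    intro g₀
    simp only [htdef, hfdef, Finset.mem_product]
    exact ⟨Finset.mul_mem_mul (Finset.inv_mem_inv (hy g₀)) (hx g₀), hu g₀, hv g₀⟩
  have pig : ∃ b ∈ t, Fintype.card G ≤ t.card * (univ.filter fun g₀ => f g₀ = b).card := by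
    by_contra hcon
    push_neg at hcon
    have hsum : ∑ b ∈ t, (univ.filter fun g₀ => f g₀ = b).card = Fintype.card G := by
      rw [← Finset.card_univ, Finset.card_eq_sum_card_fiberwise (fun a _ => hmaps a)]
    have htne : t.Nonempty := ⟨f 1, hmaps 1⟩
    have hlt : ∑ b ∈ t, t.card * (univ.filter fun g₀ => f g₀ = b).card
        < ∑ _b ∈ t, Fintype.card G :=
      Finset.sum_lt_sum_of_nonempty htne (fun b hb => hcon b hb)
    rw [← Finset.mul_sum, hsum, Finset.sum_const, smul_eq_mul] at hlt
    exact lt_irrefl _ hlt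
  obtain ⟨⟨z, uu, vv⟩, hbt, hcount⟩ := pig
  set h : G := vv * uu⁻¹ with hhdef
  set fib := univ.filter (fun g₀ => f g₀ = (z, uu, vv)) with hfibdef
  have hfibpos : 0 < fib.card := by
    rcases Nat.eq_zero_or_pos fib.card with h0 | h0
    · rw [hfibdef] at h0
      rw [h0, mul_zero] at hcount
      have := Fintype.card_pos (α := G)
      omega
    · exact h0
  obtain ⟨g₁, hg₁⟩ := Finset.card_pos.mp hfibpos
  have hfibprop : ∀ g₀ ∈ fib, g₀⁻¹ * h * g₀ = z := by
    intro g₀ hg₀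
    simp only [hfibdef, Finset.mem_filter, hfdef, Prod.mk.injEq] at hg₀
    obtain ⟨-, h1, h2, h3⟩ := hg₀
    have hq := heq g₀
    rw [h2, h3, ← hhdef] at hq
    rw [← hq, h1]
  have hz : g₁⁻¹ * h * g₁ = z := hfibprop g₁ hg₁
  have hne1 : h ≠ 1 := by
    have hv' := hvne g₁
    simp only [hfibdef, Finset.mem_filter, hfdef, Prod.mk.injEq] at hg₁
    obtain ⟨-, -, h2, h3⟩ := hg₁
    rw [h2, h3] at hv'
    simp only [hhdef, Ne, mul_inv_eq_one]
    exact fun e => hv' e.symm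
  set Z := univ.filter (fun g₀ : G => g₀⁻¹ * h * g₀ = h) with hZdef
  have hFZ : fib.card ≤ Z.card := by
    apply Finset.card_le_card_of_injOn (fun g₀ => g₀ * g₁⁻¹)
    · intro g₀ hg₀
      have hp := hfibprop g₀ hg₀
      simp only [hZdef, Finset.mem_coe, Finset.mem_filter, Finset.mem_univ, true_and]
      calc (g₀ * g₁⁻¹)⁻¹ * h * (g₀ * g₁⁻¹)
          = g₁ * (g₀⁻¹ * h * g₀) * g₁⁻¹ := by group
        _ = g₁ * (g₁⁻¹ * h * g₁) * g₁⁻¹ := by rw [hp, hz]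
        _ = h := by group
    · intro a _ b _ hab
      exact mul_right_cancel hab
  set C := univ.image (fun x : G => x⁻¹ * h * x) with hCdef
  have hfiber : ∀ c ∈ C, (univ.filter fun g₀ : G => g₀⁻¹ * h * g₀ = c).card = Z.card := by
    intro c hc
    simp only [hCdef, Finset.mem_image, Finset.mem_univ, true_and] at hc
    obtain ⟨w, hw⟩ := hc
    apply Finset.card_bij' (fun a _ => a * w⁻¹) (fun b _ => b * w)
    · intro a ha
      simp only [Finset.mem_filter, Finset.mem_univ, true_and] at ha
      simp only [hZdef, Finset.mem_filter, Finset.mem_univ, true_and]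
      calc (a * w⁻¹)⁻¹ * h * (a * w⁻¹)
          = w * (a⁻¹ * h * a) * w⁻¹ := by group
        _ = w * (w⁻¹ * h * w) * w⁻¹ := by rw [ha, hw]
        _ = h := by group
    · intro b hb
      simp only [hZdef, Finset.mem_filter, Finset.mem_univ, true_and] at hb
      simp only [Finset.mem_filter, Finset.mem_univ, true_and]
      calc (b * w)⁻¹ * h * (b * w)
          = w⁻¹ * (b⁻¹ * h * b) * w := by group
        _ = w⁻¹ * h * w := by rw [hb]
        _ = c := hw
    · intro a _; group
    · intro b _; group
  have hsum2 : C.card * Z.card = Fintype.card G := by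
    have huniv : (univ : Finset G).card = ∑ c ∈ C,
        (univ.filter fun g₀ : G => g₀⁻¹ * h * g₀ = c).card :=
      Finset.card_eq_sum_card_fiberwise
        (fun a _ => Finset.mem_image_of_mem _ (Finset.mem_univ a))
    rw [← Finset.card_univ (α := G), huniv, Finset.sum_congr rfl hfiber,
      Finset.sum_const, smul_eq_mul]
  have htcard : t.card ≤ X.card ^ 2 * S.card ^ 2 := by
    simp only [htdef, Finset.card_product]
    have h1 : (X⁻¹ * X).card ≤ X.card * X.card := by
      calc (X⁻¹ * X).card ≤ X⁻¹.card * X.card := Finset.card_mul_le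
        _ = X.card * X.card := by rw [Finset.card_inv]
    calc (X⁻¹ * X).card * (S.card * S.card)
        ≤ (X.card * X.card) * (S.card * S.card) := Nat.mul_le_mul_right _ h1
      _ = X.card ^ 2 * S.card ^ 2 := by ring
  have hCle : C.card ≤ t.card := by
    have h1 : C.card * Fintype.card G ≤ C.card * (t.card * fib.card) :=
      Nat.mul_le_mul_left _ hcount
    have h2 : C.card * (t.card * fib.card) ≤ t.card * (C.card * Z.card) := by
      calc C.card * (t.card * fib.card) = t.card * (C.card * fib.card) := by ring
        _ ≤ t.card * (C.card * Z.card) :=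
          Nat.mul_le_mul_left _ (Nat.mul_le_mul_left _ hFZ)
    rw [hsum2] at h2
    exact Nat.le_of_mul_le_mul_right (le_trans h1 h2) Fintype.card_pos
  exact ⟨m, hm1, g, hX, h, hne1, le_trans hCle htcard⟩
end

section
/- Fix a real number a ≥ 1. Let G be a finite group, and let A, B be finite subsets of G with A nonempty, B a normal subset of G, and suppose: (i) there is a positive integer m ≤ a·log|G|/log|B| with B^m = G, and (ii) |A| ≤ |G|^(1−δ) for some δ > 0. Then |A*B| ≥ |A| · |B|^(δ/a). -/
open Finset Pointwise

/-- Petridis-type lemma for normal sets. -/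
lemma petridis_normal {G : Type*} [Group G] [DecidableEq G] (B X : Finset G)
    (hconj : ∀ g b, b ∈ B → g⁻¹ * b * g ∈ B)
    (hmin : ∀ Y ⊆ X, (X * B).card * Y.card ≤ (Y * B).card * X.card) :
    ∀ C : Finset G, (X * B * C).card * X.card ≤ (X * B).card * (X * C).card := by
  intro C
  classical
  induction C using Finset.induction_on with
  | empty => simp
  | @insert c C hc ih =>
    set Z : Finset G := X.filter (fun x => ∀ b ∈ B, x * b * c ∈ X * B * C) with hZdef
    have hZX : Z ⊆ X := filter_subset _ _
    have hZB : Z * B ⊆ X * B := mul_subset_mul_right hZX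
    -- (1)
    have hsub1 : X * B * insert c C ⊆ (X * B * C) ∪ (((X * B) \ (Z * B)) * {c}) := by
      intro t ht
      obtain ⟨y, hy, c', hc', rfl⟩ := Finset.mem_mul.1 ht
      rcases Finset.mem_insert.1 hc' with rfl | hcC
      · by_cases hyZ : y ∈ Z * B
        · obtain ⟨z, hz, b, hb, rfl⟩ := Finset.mem_mul.1 hyZ
          exact Finset.mem_union_left _ ((Finset.mem_filter.1 hz).2 b hb)
        · exact Finset.mem_union_right _
            (Finset.mem_mul.2 ⟨y, Finset.mem_sdiff.2 ⟨hy, hyZ⟩, c', Finset.mem_singleton_self _, rfl⟩)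
      · exact Finset.mem_union_left _ (mul_mem_mul hy hcC)
    have h1' : (X * B * insert c C).card + (Z * B).card ≤ (X * B * C).card + (X * B).card := by
      have := (card_le_card hsub1).trans (card_union_le _ _)
      rw [Finset.card_mul_singleton, Finset.card_sdiff_of_subset hZB] at this
      have h := card_le_card hZB
      omega
    -- (2)
    have h2 := hmin Z hZX
    -- (3)
    have hclaim : ∀ x ∈ X, x * c ∈ X * C → x ∈ Z := by
      intro x hx hxc
      refine Finset.mem_filter.2 ⟨hx, fun b hb => ?_⟩
      obtain ⟨x', hx', c', hc', heq⟩ := Finset.mem_mul.1 hxc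
      have hb1 : c⁻¹ * b * c ∈ B := hconj c b hb
      have hb2 : c' * (c⁻¹ * b * c) * c'⁻¹ ∈ B := by
        have := hconj c'⁻¹ _ hb1
        simpa using this
      have : x * b * c = x' * (c' * (c⁻¹ * b * c) * c'⁻¹) * c' := by
        have h : x' * c' = x * c := heq
        calc x * b * c = (x * c) * (c⁻¹ * b * c) := by group
          _ = (x' * c') * (c⁻¹ * b * c) := by rw [h]
          _ = x' * (c' * (c⁻¹ * b * c) * c'⁻¹) * c' := by group
      rw [this]
      exact mul_mem_mul (mul_mem_mul hx' hb2) hc'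
    have hdisj : Disjoint ((X \ Z) * {c}) (X * C) := by
      rw [Finset.disjoint_left]
      intro t ht htc
      obtain ⟨x, hx, c'', hc'', rfl⟩ := Finset.mem_mul.1 ht
      rw [Finset.mem_singleton] at hc''
      subst hc''
      have hxX := Finset.mem_sdiff.1 hx
      exact hxX.2 (hclaim x hxX.1 htc)
    have hunion : ((X \ Z) * {c}) ∪ (X * C) ⊆ X * insert c C := by
      apply Finset.union_subset
      · exact mul_subset_mul (sdiff_subset) (singleton_subset_iff.2 (mem_insert_self c C))
      · exact mul_subset_mul_left (subset_insert c C)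
    have h3' : X.card + (X * C).card ≤ (X * insert c C).card + Z.card := by
      have := card_le_card hunion
      rw [Finset.card_union_of_disjoint hdisj, Finset.card_mul_singleton,
        Finset.card_sdiff_of_subset hZX] at this
      have h := card_le_card hZX
      omega
    -- combine
    have p1 := Nat.mul_le_mul_right X.card h1'
    have p2 := Nat.mul_le_mul_left (X * B).card h3'
    nlinarith [p1, p2, ih, h2]

lemma petridis_pow {G : Type*} [Group G] [DecidableEq G] (B X : Finset G)
    (hconj : ∀ g b, b ∈ B → g⁻¹ * b * g ∈ B)
    (hmin : ∀ Y ⊆ X, (X * B).card * Y.card ≤ (Y * B).card * X.card) :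
    ∀ n : ℕ, (X * B ^ n).card * X.card ^ n ≤ (X * B).card ^ n * X.card := by
  intro n
  induction n with
  | zero => simp
  | succ n ih =>
    have hp := petridis_normal B X hconj hmin (B ^ n)
    have hE : X * B ^ (n + 1) = X * B * B ^ n := by
      rw [pow_succ']; rw [mul_assoc]
    calc (X * B ^ (n + 1)).card * X.card ^ (n + 1)
        = ((X * B * B ^ n).card * X.card) * X.card ^ n := by rw [hE]; ring
      _ ≤ ((X * B).card * (X * B ^ n).card) * X.card ^ n := Nat.mul_le_mul_right _ hp
      _ = (X * B).card * ((X * B ^ n).card * X.card ^ n) := by ring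
      _ ≤ (X * B).card * ((X * B).card ^ n * X.card) := Nat.mul_le_mul_left _ ih
      _ = (X * B).card ^ (n + 1) * X.card := by ring

set_option maxHeartbeats 1000000 in
/-- Expansion of normal subsets (strengthening of a theorem of Shalev). -/
theorem normal_subset_expansion {G : Type*} [Group G] [Fintype G] [DecidableEq G]
    (a : ℝ) (ha : 1 ≤ a)
    (A B : Finset G) (hA : A.Nonempty) (hB : 2 ≤ B.card)
    (hBnormal : ∀ g : G, B.image (fun b => g⁻¹ * b * g) = B)
    (m : ℕ) (hm : 0 < m)
    (hmle : (m : ℝ) ≤ a * Real.log (Fintype.card G) / Real.log B.card)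
    (hBm : B ^ m = (Finset.univ : Finset G))
    (δ : ℝ) (hδ : 0 < δ)
    (hAsmall : (A.card : ℝ) ≤ (Fintype.card G : ℝ) ^ ((1 : ℝ) - δ)) :
    (A.card : ℝ) * (B.card : ℝ) ^ (δ / a) ≤ ((A * B).card : ℝ) := by
  classical
  have hconj : ∀ g b, b ∈ B → g⁻¹ * b * g ∈ B := by
    intro g b hb
    rw [← hBnormal g]
    exact Finset.mem_image_of_mem _ hb
  have hBne : B.Nonempty := Finset.card_pos.1 (by omega)
  -- choose minimizing X
  obtain ⟨X, hXS, hXmin⟩ := Finset.exists_min_image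
    (A.powerset.filter Finset.Nonempty) (fun Y => ((Y * B).card : ℚ) / Y.card)
    ⟨A, by simp [hA]⟩
  rw [Finset.mem_filter, Finset.mem_powerset] at hXS
  obtain ⟨hXA, hXne⟩ := hXS
  have hmin : ∀ Y ⊆ X, (X * B).card * Y.card ≤ (Y * B).card * X.card := by
    intro Y hYX
    rcases Y.eq_empty_or_nonempty with rfl | hYne
    · simp
    · have hY : Y ∈ A.powerset.filter Finset.Nonempty := by
        rw [Finset.mem_filter, Finset.mem_powerset]; exact ⟨hYX.trans hXA, hYne⟩
      have := hXmin Y hY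
      rw [div_le_div_iff₀ (by exact_mod_cast hXne.card_pos) (by exact_mod_cast hYne.card_pos)] at this
      exact_mod_cast this
  -- key counting facts
  have hXuniv : X * (Finset.univ : Finset G) = Finset.univ := by
    rw [Finset.eq_univ_iff_forall]
    intro g
    obtain ⟨x, hx⟩ := hXne
    exact Finset.mem_mul.2 ⟨x, hx, x⁻¹ * g, Finset.mem_univ _, by group⟩
  have e1 : Fintype.card G * X.card ^ m ≤ (X * B).card ^ m * X.card := by
    have := petridis_pow B X hconj hmin m
    rwa [hBm, hXuniv, Finset.card_univ] at this
  have e2 : (X * B).card * A.card ≤ (A * B).card * X.card := by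
    have := hXmin A (by simp [hA])
    rw [div_le_div_iff₀ (by exact_mod_cast hXne.card_pos) (by exact_mod_cast hA.card_pos)] at this
    exact_mod_cast this
  have e3 : X.card ≤ A.card := card_le_card hXA
  -- positivity
  have ha0 : (0:ℝ) < a := lt_of_lt_of_le one_pos ha
  have hm0 : (0:ℝ) < (m:ℝ) := by exact_mod_cast hm
  have hxpos : (0:ℝ) < (X.card:ℝ) := by exact_mod_cast hXne.card_pos
  have hkpos : (0:ℝ) < ((X * B).card:ℝ) := by
    exact_mod_cast (Finset.mul_nonempty.2 ⟨hXne, hBne⟩).card_pos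
  have hαpos : (0:ℝ) < (A.card:ℝ) := by exact_mod_cast hA.card_pos
  have hβpos : (0:ℝ) < ((A * B).card:ℝ) := by
    exact_mod_cast (Finset.mul_nonempty.2 ⟨hA, hBne⟩).card_pos
  have hNpos : (0:ℝ) < (Fintype.card G:ℝ) := by exact_mod_cast Fintype.card_pos
  have hBpos : (0:ℝ) < (B.card:ℝ) := by positivity
  -- log facts
  have l1 : Real.log (Fintype.card G) + (m:ℝ) * Real.log (X.card) ≤
      (m:ℝ) * Real.log ((X * B).card) + Real.log (X.card) := by
    have he1 : ((Fintype.card G):ℝ) * (X.card:ℝ) ^ m ≤ ((X * B).card:ℝ) ^ m * (X.card:ℝ) := by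
      exact_mod_cast e1
    have := Real.log_le_log (by positivity) he1
    rw [Real.log_mul (by positivity) (by positivity),
      Real.log_mul (by positivity) (by positivity), Real.log_pow, Real.log_pow] at this
    linarith
  have l2 : Real.log ((X * B).card) + Real.log (A.card) ≤
      Real.log ((A * B).card) + Real.log (X.card) := by
    have he2 : ((X * B).card:ℝ) * (A.card:ℝ) ≤ ((A * B).card:ℝ) * (X.card:ℝ) := by
      exact_mod_cast e2
    have := Real.log_le_log (by positivity) he2
    rw [Real.log_mul (by positivity) (by positivity),
      Real.log_mul (by positivity) (by positivity)] at this
    linarith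
  have l3 : Real.log (X.card) ≤ Real.log (A.card) :=
    Real.log_le_log hxpos (by exact_mod_cast e3)
  have l4 : Real.log (A.card) ≤ (1 - δ) * Real.log (Fintype.card G) := by
    have := Real.log_le_log hαpos hAsmall
    rwa [Real.log_rpow hNpos] at this
  have hB1 : (1:ℝ) < (B.card:ℝ) := by exact_mod_cast lt_of_lt_of_le one_lt_two hB
  have hlogB : 0 < Real.log B.card := Real.log_pos hB1
  have l5 : (m:ℝ) * Real.log B.card ≤ a * Real.log (Fintype.card G) := by
    rw [div_eq_mul_inv] at hmle
    have := mul_le_mul_of_nonneg_right hmle hlogB.le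
    rwa [mul_assoc, inv_mul_cancel₀ (ne_of_gt hlogB), mul_one] at this
  -- derive the main log inequality
  have hA2 : (m:ℝ) * (Real.log ((X * B).card) - Real.log (X.card)) ≤
      (m:ℝ) * (Real.log ((A * B).card) - Real.log (A.card)) :=
    mul_le_mul_of_nonneg_left (by linarith) hm0.le
  have step1 : δ * Real.log (Fintype.card G) ≤
      (m:ℝ) * (Real.log ((A * B).card) - Real.log (A.card)) := by nlinarith [l1, l3, l4, hA2]
  have h5' : δ * ((m:ℝ) * Real.log B.card) ≤ δ * (a * Real.log (Fintype.card G)) :=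
    mul_le_mul_of_nonneg_left l5 hδ.le
  have step1' : a * (δ * Real.log (Fintype.card G)) ≤
      a * ((m:ℝ) * (Real.log ((A * B).card) - Real.log (A.card))) :=
    mul_le_mul_of_nonneg_left step1 ha0.le
  have step2 : δ * Real.log B.card ≤
      a * (Real.log ((A * B).card) - Real.log (A.card)) := by
    have h6 : (m:ℝ) * (δ * Real.log B.card) ≤
        (m:ℝ) * (a * (Real.log ((A * B).card) - Real.log (A.card))) := by
      nlinarith [h5', step1']
    exact le_of_mul_le_mul_left h6 hm0
  have step3 : (δ / a) * Real.log B.card ≤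
      Real.log ((A * B).card) - Real.log (A.card) := by
    rw [div_mul_eq_mul_div, div_le_iff₀ ha0]
    linarith [step2]
  have final : Real.log ((A.card:ℝ) * (B.card : ℝ) ^ (δ / a)) ≤ Real.log ((A * B).card) := by
    rw [Real.log_mul (ne_of_gt hαpos) (by positivity), Real.log_rpow hBpos]
    linarith
  have hlhs : (0:ℝ) < (A.card:ℝ) * (B.card : ℝ) ^ (δ / a) := by positivity
  exact (Real.log_le_log_iff hlhs hβpos).1 final
end

section
/- Suppose for a finite group G and a finite subset S with |S| ≥ 2 it holds that for every positive integer M, G is the product of 3·2^M conjugates of S whenever |G| ≤ |S|^((1+ε)^M), given the hypothesis: for every subset T of G of size at least 2, either T³ = G or there exists g ∈ G with |T * g⁻¹Tg| ≥ |T|^(1+ε). Conclude: if for every subset T of G with |T| ≥ 2 either T³ = G or |T T^g| ≥ |T|^(1+ε) for some g, then G is a product of N conjugates of S for some N ≤ 3·(log|G|/log|S|)^d, where d = log 2 / log(1+ε). -/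
open Finset Pointwise

private def conjF {G : Type*} [Group G] [DecidableEq G] (S : Finset G) (a : G) : Finset G :=
  S.image (fun s => a⁻¹ * s * a)

private lemma image_conj_mul {G : Type*} [Group G] [DecidableEq G] (g : G) (A B : Finset G) :
    (A * B).image (fun x => g⁻¹ * x * g) =
      A.image (fun x => g⁻¹ * x * g) * B.image (fun x => g⁻¹ * x * g) := by
  have h : (fun x : G => g⁻¹ * x * g) = ⇑((MulAut.conj g⁻¹).toMonoidHom) := by
    funext x; simp [MulAut.conj_apply]
  rw [h, Finset.image_mul]

private lemma prod_map_conj {G : Type*} [Group G] [DecidableEq G] (S : Finset G) (g₀ : G)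
    (l : List G) :
    ((l.map (conjF S)).prod).image (fun x => g₀⁻¹ * x * g₀) =
      ((l.map (· * g₀)).map (conjF S)).prod := by
  induction l with
  | nil => simp; rfl
  | cons a t ih =>
      simp only [List.map_cons, List.prod_cons, image_conj_mul]
      rw [ih]
      congr 1
      simp only [conjF, Finset.image_image]
      apply Finset.image_congr
      intro x _
      simp [mul_assoc, mul_inv_rev]

/-- From the growth dichotomy one obtains a polylogarithmic product decomposition
into conjugates. -/
theorem polynomial_product_decomposition {G : Type*} [Group G] [Fintype G] [DecidableEq G]
    (ε : ℝ) (hε : 0 < ε)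
    (S : Finset G) (hS : 2 ≤ S.card)
    (hstep : ∀ M : ℕ,
      ((Fintype.card G : ℝ) ≤ (S.card : ℝ) ^ ((1 + ε) ^ M)) →
      ∃ g : Fin (3 * 2 ^ M) → G,
        (List.ofFn (fun i => S.image (fun s => (g i)⁻¹ * s * (g i)))).prod
          = (Finset.univ : Finset G))
    (hdub : ∀ T : Finset G, 2 ≤ T.card →
      (T ^ 3 = (Finset.univ : Finset G) ∨
        ∃ g : G, ((T.card : ℝ) ^ ((1 : ℝ) + ε) ≤
          ((T * T.image (fun t => g⁻¹ * t * g)).card : ℝ)))) :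
    ∃ (N : ℕ) (g : Fin N → G),
      (List.ofFn (fun i => S.image (fun s => (g i)⁻¹ * s * (g i)))).prod
        = (Finset.univ : Finset G) ∧
      (N : ℝ) ≤ 3 * (Real.log (Fintype.card G) / Real.log S.card)
        ^ (Real.log 2 / Real.log (1 + ε)) := by
  by_contra hgoal
  have h1S : (1 : ℝ) < S.card := by exact_mod_cast hS
  have hS0 : (0 : ℝ) ≤ (S.card : ℝ) := by positivity
  have hlogS : 0 < Real.log S.card := Real.log_pos h1S
  have h1ε : (1 : ℝ) < 1 + ε := by linarith
  have hlogε : 0 < Real.log (1 + ε) := Real.log_pos h1ε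
  have key : ∀ k : ℕ, ∃ l : List G, l.length = 2 ^ k ∧
      (S.card : ℝ) ^ ((1 + ε) ^ k) ≤ (((l.map (conjF S)).prod).card : ℝ) := by
    intro k
    induction k with
    | zero =>
        refine ⟨[1], rfl, ?_⟩
        simp [conjF, pow_zero, Real.rpow_one]
    | succ k ih =>
        obtain ⟨l, hl, hcard⟩ := ih
        set T := (l.map (conjF S)).prod with hT
        have hone : (1 : ℝ) ≤ (1 + ε) ^ k := one_le_pow₀ h1ε.le
        have hST : (S.card : ℝ) ≤ (T.card : ℝ) := by
          calc (S.card : ℝ) = (S.card : ℝ) ^ (1 : ℝ) := (Real.rpow_one _).symm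
            _ ≤ (S.card : ℝ) ^ ((1 + ε) ^ k) :=
                Real.rpow_le_rpow_of_exponent_le h1S.le hone
            _ ≤ (T.card : ℝ) := hcard
        have hT2 : 2 ≤ T.card := by
          have h2r : (2 : ℝ) ≤ (T.card : ℝ) := le_trans (by exact_mod_cast hS) hST
          exact_mod_cast h2r
        rcases hdub T hT2 with h3 | ⟨g₀, hg₀⟩
        · exfalso
          apply hgoal
          set l' : List G := l ++ l ++ l with hl'
          refine ⟨l'.length, l'.get, ?_, ?_⟩
          · have h1 : List.ofFn (fun i => conjF S (l'.get i)) = l'.map (conjF S) := by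
              conv_rhs => rw [← List.ofFn_get l']
              rw [List.map_ofFn]
              rfl
            show (List.ofFn (fun i => conjF S (l'.get i))).prod = (Finset.univ : Finset G)
            rw [h1, hl']
            simp only [List.map_append, List.prod_append]
            rw [← hT]
            have : T * T * T = T ^ 3 := by rw [pow_succ, sq]
            rw [this, h3]
          · have hlen : (l'.length : ℝ) = 3 * 2 ^ k := by
              have : l'.length = 2 ^ k + 2 ^ k + 2 ^ k := by
                simp [hl', hl]; omega
              rw [this]; push_cast; ring
            rw [hlen]
            have hTle : (T.card : ℝ) ≤ (Fintype.card G : ℝ) := by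
              exact_mod_cast (Finset.card_le_univ T).trans_eq (Finset.card_univ)
            have h5 : (S.card : ℝ) ^ ((1 + ε) ^ k) ≤ (Fintype.card G : ℝ) := hcard.trans hTle
            have hk : ((1 + ε) ^ k : ℝ) ≤ Real.log (Fintype.card G) / Real.log S.card := by
              rw [le_div_iff₀ hlogS]
              have := Real.log_le_log (by positivity) h5
              rwa [Real.log_rpow (by positivity)] at this
            set d : ℝ := Real.log 2 / Real.log (1 + ε) with hd
            have hd0 : 0 ≤ d := div_nonneg (Real.log_nonneg one_le_two) hlogε.le
            have hεd : ((1 + ε) : ℝ) ^ d = 2 := by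
              rw [Real.rpow_def_of_pos (by linarith), hd,
                mul_div_cancel₀ _ hlogε.ne', Real.exp_log two_pos]
            have key2 : (((1 + ε) ^ k : ℝ)) ^ d = (2 : ℝ) ^ k := by
              rw [← Real.rpow_natCast (1 + ε) k, ← Real.rpow_mul (by linarith),
                mul_comm, Real.rpow_mul (by linarith), hεd, Real.rpow_natCast]
            have hfin : (2 : ℝ) ^ k ≤
                (Real.log (Fintype.card G) / Real.log S.card) ^ d := by
              rw [← key2]
              exact Real.rpow_le_rpow (by positivity) hk hd0
            nlinarith [hfin]
        · refine ⟨l ++ l.map (· * g₀), ?_, ?_⟩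
          · simp [hl, pow_succ, two_mul]; omega
          · have hprod : ((l ++ l.map (· * g₀)).map (conjF S)).prod =
                T * T.image (fun t => g₀⁻¹ * t * g₀) := by
              rw [List.map_append, List.prod_append, ← prod_map_conj, ← hT]
            rw [hprod]
            have hexp : (S.card : ℝ) ^ ((1 + ε) ^ (k + 1)) =
                ((S.card : ℝ) ^ ((1 + ε) ^ k)) ^ ((1 : ℝ) + ε) := by
              rw [← Real.rpow_mul hS0, ← pow_succ]
            rw [hexp]
            calc ((S.card : ℝ) ^ ((1 + ε) ^ k)) ^ ((1 : ℝ) + ε)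
                ≤ ((T.card : ℝ)) ^ ((1 : ℝ) + ε) :=
                  Real.rpow_le_rpow (by positivity) hcard (by linarith)
              _ ≤ _ := hg₀
  -- termination: contradiction
  obtain ⟨n, hn⟩ := pow_unbounded_of_one_lt
    (Real.log (Fintype.card G) / Real.log S.card) h1ε
  obtain ⟨l, hl, hcard⟩ := key n
  have hTle : (((l.map (conjF S)).prod).card : ℝ) ≤ (Fintype.card G : ℝ) := by
    exact_mod_cast (Finset.card_le_univ _).trans_eq (Finset.card_univ)
  have hG1 : (0 : ℝ) < (Fintype.card G : ℝ) := by
    have := Fintype.card_pos (α := G)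
    exact_mod_cast this
  have hbig : (Fintype.card G : ℝ) < (S.card : ℝ) ^ ((1 + ε) ^ n) := by
    have h2 : (Fintype.card G : ℝ) = (S.card : ℝ) ^
        (Real.log (Fintype.card G) / Real.log S.card) := by
      rw [Real.rpow_def_of_pos (by positivity), mul_div_cancel₀ _ hlogS.ne',
        Real.exp_log hG1]
    rw [h2]
    exact Real.rpow_lt_rpow_of_exponent_lt h1S hn
  linarith [hcard.trans hTle]
end
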